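/- arXiv:1504.08160 — 10 statements merged into one kernel-verified Lean document; each statement's English description precedes it below -/
import Mathlib

section
/- Suppose that sup_{n,i≥1} μ_n/μ_{n+i} < ∞, that λ_n/μ_n → 0 as n → ∞, and that Σ_{n≥1} 1/μ_n < ∞. Then μ_{n+1}·e_n → 1 as n → ∞, i.e. e_n is asymptotically equivalent to 1/μ_{n+1}. -/
/-!
With `ρ m = λ m / μ (m+1)` one has `μ (n+1) e n = ∑ₖ ρ (n+1) ⋯ ρ (n+k)`. Since
`ρ m = (λ m / μ m) (μ m / μ (m+1))` is a null sequence times a bounded one, all factors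
`ρ (n+1+j)` are at most a given `q < 1` once `n` is large, and then the sum lies between its
first term `1` and the geometric bound `(1 - q)⁻¹`.
-/

open Filter Finset Topology

lemma one_le_tsum_prod_range_and_le {r : ℕ → ℝ} {q : ℝ} (hr0 : ∀ k, 0 ≤ r k)
    (hrq : ∀ k, r k ≤ q) (hq : q < 1) :
    1 ≤ ∑' k, ∏ j ∈ range k, r j ∧ ∑' k, ∏ j ∈ range k, r j ≤ (1 - q)⁻¹ := by
  have hq0 : 0 ≤ q := (hr0 0).trans (hrq 0)
  have hnonneg : ∀ k, 0 ≤ ∏ j ∈ range k, r j := fun k => prod_nonneg fun j _ => hr0 j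
  have hle_pow : ∀ k, ∏ j ∈ range k, r j ≤ q ^ k := fun k => by
    simpa using prod_le_prod (fun j _ => hr0 j) (fun j _ => hrq j) (s := range k)
  have hgeom := summable_geometric_of_lt_one hq0 hq
  have hsum : Summable fun k => ∏ j ∈ range k, r j := hgeom.of_nonneg_of_le hnonneg hle_pow
  constructor
  · simpa using hsum.le_tsum 0 fun k _ => hnonneg k
  · calc ∑' k, ∏ j ∈ range k, r j ≤ ∑' k, q ^ k := hsum.tsum_le_tsum hle_pow hgeom
      _ = (1 - q)⁻¹ := tsum_geometric_of_lt_one hq0 hq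

lemma eventually_forall_add_nonneg_and_le {ρ : ℕ → ℝ} (h0 : ∀ᶠ m in atTop, 0 ≤ ρ m)
    (hρ : Tendsto ρ atTop (𝓝 0)) {q : ℝ} (hq : 0 < q) :
    ∀ᶠ n in atTop, ∀ j, 0 ≤ ρ (n + j) ∧ ρ (n + j) ≤ q :=
  (eventually_forall_ge_atTop.2 (h0.and (hρ.eventually (ge_mem_nhds hq)))).mono
    fun _ hn j => hn _ (Nat.le_add_right _ j)

theorem tendsto_tsum_prod_range_shift {ρ : ℕ → ℝ} (h0 : ∀ᶠ m in atTop, 0 ≤ ρ m)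
    (hρ : Tendsto ρ atTop (𝓝 0)) :
    Tendsto (fun n => ∑' k, ∏ j ∈ range k, ρ (n + j)) atTop (𝓝 1) := by
  refine tendsto_order.2 ⟨fun a ha => ?_, fun b hb => ?_⟩
  · filter_upwards [eventually_forall_add_nonneg_and_le h0 hρ one_half_pos] with n hn
    exact ha.trans_le
      (one_le_tsum_prod_range_and_le (fun j => (hn j).1) (fun j => (hn j).2) (by norm_num)).1
  · have hb0 : 0 < b := one_pos.trans hb
    have hbinv : b⁻¹ < 1 := inv_lt_one_of_one_lt₀ hb
    -- halfway between `0` and `1 - b⁻¹`, so that `1 - q > b⁻¹`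
    set q := (1 - b⁻¹) / 2 with hq_def
    have hq : 0 < q := by linarith
    have hq1 : q < 1 := by linarith [inv_pos.2 hb0]
    have hqb : (1 - q)⁻¹ < b := by rw [inv_lt_comm₀ (by linarith) hb0]; linarith
    filter_upwards [eventually_forall_add_nonneg_and_le h0 hρ hq] with n hn
    exact (one_le_tsum_prod_range_and_le (fun j => (hn j).1) (fun j => (hn j).2) hq1).2.trans_lt hqb

lemma mul_prod_range_div_prod_range_succ (a b : ℕ → ℝ) (hb : ∀ j, b j ≠ 0) (k : ℕ) :
    b 0 * ((∏ j ∈ range k, a j) / ∏ j ∈ range (k + 1), b j) = ∏ j ∈ range k, a j / b (j + 1) := by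
  have hprod : ∏ j ∈ range k, b (j + 1) ≠ 0 := prod_ne_zero_iff.2 fun j _ => hb (j + 1)
  rw [prod_range_succ', prod_div_distrib]
  field_simp [hb 0]

theorem stmt1_general (lam mu : ℕ → ℝ)
    (hlam : ∀ n ≥ 1, 0 ≤ lam n) (hmu : ∀ n ≥ 1, 0 < mu n)
    (hsup : ∃ C : ℝ, ∀ n ≥ 1, ∀ i ≥ 1, mu n / mu (n + i) ≤ C)
    (hratio : Tendsto (fun n => lam n / mu n) atTop (nhds 0))
    (e : ℕ → ℝ)
    (he : ∀ n, e n = ∑' k : ℕ,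
      (∏ j ∈ Finset.range k, lam (n + 1 + j)) / (∏ j ∈ Finset.range (k + 1), mu (n + 1 + j))) :
    Tendsto (fun n => mu (n + 1) * e n) atTop (nhds 1) := by
  obtain ⟨C, hC⟩ := hsup
  have hρ0 : ∀ᶠ m in atTop, 0 ≤ lam m / mu (m + 1) :=
    eventually_atTop.2 ⟨1, fun m hm => div_nonneg (hlam m hm) (hmu (m + 1) (by omega)).le⟩
  have hρ : Tendsto (fun m => lam m / mu (m + 1)) atTop (𝓝 0) := by
    refine squeeze_zero' hρ0 (eventually_atTop.2 ⟨1, fun m hm => ?_⟩)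
      (by simpa using hratio.const_mul C)
    have hm0 := hmu m hm
    calc lam m / mu (m + 1) = lam m / mu m * (mu m / mu (m + 1)) := by field_simp
      _ ≤ lam m / mu m * C :=
        mul_le_mul_of_nonneg_left (hC m hm 1 le_rfl) (div_nonneg (hlam m hm) hm0.le)
      _ = C * (lam m / mu m) := mul_comm _ _
  refine ((tendsto_tsum_prod_range_shift hρ0 hρ).comp (tendsto_add_atTop_nat 1)).congr fun n => ?_
  rw [he n, ← tsum_mul_left]
  refine tsum_congr fun k => ?_
  rw [mul_prod_range_div_prod_range_succ (fun j => lam (n + 1 + j)) (fun j => mu (n + 1 + j))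
    (fun j => (hmu _ (by omega)).ne') k]
  rfl

/-- If `sup_{n,i≥1} μ_n/μ_{n+i} < ∞`, `λ_n/μ_n → 0` and `Σ 1/μ_n < ∞`, then the mean time
`e n = E_{n+1}(T_n)` to go from `n+1` to `n` satisfies `μ_{n+1}·e_n → 1`,
i.e. `e_n ~ 1/μ_{n+1}`. -/
theorem stmt1 (lam mu : ℕ → ℝ)
    (hlam : ∀ n ≥ 1, 0 ≤ lam n) (hmu : ∀ n ≥ 1, 0 < mu n)
    (hsup : ∃ C : ℝ, ∀ n ≥ 1, ∀ i ≥ 1, mu n / mu (n + i) ≤ C)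
    (hratio : Tendsto (fun n => lam n / mu n) atTop (nhds 0))
    (hsummu : Summable (fun n : ℕ => 1 / mu (n + 1)))
    (e : ℕ → ℝ)
    (he : ∀ n, e n = ∑' k : ℕ,
      (∏ j ∈ Finset.range k, lam (n + 1 + j)) / (∏ j ∈ Finset.range (k + 1), mu (n + 1 + j))) :
    Tendsto (fun n => mu (n + 1) * e n) atTop (nhds 1) :=
  stmt1_general lam mu hlam hmu hsup hratio e he
end

section
/- Suppose that sup_{n,i≥1} μ_n/μ_{n+i} < ∞, that λ_n/μ_n → 0 as n → ∞, that λ_n > 0 for all n ≥ 1, and that Σ_{n≥1} 1/μ_n < ∞. Then μ_{n+1}²·M_n → 2 as n → ∞, i.e. M_n is asymptotically equivalent to 2/μ_{n+1}². -/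
/-!
Write `q_n(k) = ∏_{j=n+1}^{n+k} λ_j/μ_j`, so that `μ_{n+1} e_n = Σ_k q_n(k) μ_{n+1}/μ_{n+1+k}` and
`μ_{n+1}² M_n = 2 Σ_k q_n(k) (μ_{n+1} e_{n+k})²`. Once `λ_j/μ_j ≤ 1/2` for `j > n` we have
`q_n(k+1) ≤ (λ_{n+1}/μ_{n+1}) 2^{-k}`, so each of these series is its `k = 0` term plus a tail of
size `O(λ_{n+1}/μ_{n+1}) → 0`, as long as the weights stay bounded. For the first series the
weights are bounded by the supremum hypothesis, giving `μ_{n+1} e_n → 1`; this in turn bounds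
`μ_{n+1} e_{n+k} = (μ_{n+1}/μ_{n+k+1}) · μ_{n+k+1} e_{n+k}`, the weights of the second series.
-/

open Filter Finset Topology

theorem prod_range_succ_le_mul_geometric {r : ℕ → ℝ} {n : ℕ}
    (hr : ∀ j, n < j → 0 ≤ r j ∧ r j ≤ 1 / 2) (k : ℕ) :
    ∏ j ∈ range (k + 1), r (n + 1 + j) ≤ r (n + 1) * (1 / 2) ^ k := by
  rw [prod_range_succ', mul_comm]
  gcongr
  · exact (hr _ (by omega)).1
  · calc ∏ j ∈ range k, r (n + 1 + (j + 1))
        ≤ ∏ _j ∈ range k, (1 / 2 : ℝ) :=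
          prod_le_prod (fun j _ => (hr _ (by omega)).1) (fun j _ => (hr _ (by omega)).2)
      _ = (1 / 2) ^ k := by simp

theorem summable_prod_mul_and_tsum_le {r w : ℕ → ℝ} {n : ℕ} {B : ℝ}
    (hr : ∀ j, n < j → 0 ≤ r j ∧ r j ≤ 1 / 2) (hw : ∀ k, 0 ≤ w k ∧ w k ≤ B) :
    Summable (fun k => (∏ j ∈ range (k + 1), r (n + 1 + j)) * w k) ∧
      ∑' k, (∏ j ∈ range (k + 1), r (n + 1 + j)) * w k ≤ 2 * B * r (n + 1) := by
  have hterm0 : ∀ k, 0 ≤ (∏ j ∈ range (k + 1), r (n + 1 + j)) * w k := fun k =>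
    mul_nonneg (prod_nonneg fun j _ => (hr _ (by omega)).1) (hw k).1
  have hterm_le : ∀ k, (∏ j ∈ range (k + 1), r (n + 1 + j)) * w k ≤
      r (n + 1) * B * (1 / 2) ^ k := fun k => by
    calc (∏ j ∈ range (k + 1), r (n + 1 + j)) * w k
        ≤ r (n + 1) * (1 / 2) ^ k * B :=
          mul_le_mul (prod_range_succ_le_mul_geometric hr k) (hw k).2 (hw k).1
            (mul_nonneg (hr _ (by omega)).1 (by positivity))
      _ = r (n + 1) * B * (1 / 2) ^ k := by ring
  have hgeom := summable_geometric_two.mul_left (r (n + 1) * B)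
  have hsum := Summable.of_nonneg_of_le hterm0 hterm_le hgeom
  refine ⟨hsum, ?_⟩
  calc ∑' k, (∏ j ∈ range (k + 1), r (n + 1 + j)) * w k
      ≤ ∑' k, r (n + 1) * B * (1 / 2 : ℝ) ^ k := hsum.tsum_le_tsum hterm_le hgeom
    _ = 2 * B * r (n + 1) := by rw [tsum_mul_left, tsum_geometric_two]; ring

theorem tendsto_tsum_prod_mul {r : ℕ → ℝ} {w : ℕ → ℕ → ℝ} {B L : ℝ}
    (hr0 : ∀ᶠ j in atTop, 0 ≤ r j) (hr : Tendsto r atTop (𝓝 0))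
    (hw : ∀ᶠ n in atTop, ∀ k, 0 ≤ w n (k + 1) ∧ w n (k + 1) ≤ B)
    (hw0 : Tendsto (fun n => w n 0) atTop (𝓝 L)) :
    Tendsto (fun n => ∑' k, (∏ j ∈ range k, r (n + 1 + j)) * w n k) atTop (𝓝 L) := by
  obtain ⟨N, hN⟩ := eventually_atTop.1 (hr0.and (hr.eventually (ge_mem_nhds one_half_pos)))
  have hsmall : ∀ᶠ n in atTop, ∀ j, n < j → 0 ≤ r j ∧ r j ≤ 1 / 2 :=
    eventually_atTop.2 ⟨N, fun n hn j hj => hN j (by omega)⟩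
  have htail := hsmall.and hw
  have hsplit : ∀ᶠ n in atTop, ∑' k, (∏ j ∈ range k, r (n + 1 + j)) * w n k =
      w n 0 + ∑' k, (∏ j ∈ range (k + 1), r (n + 1 + j)) * w n (k + 1) :=
    htail.mono fun n ⟨hrn, hwn⟩ => by
      rw [tsum_eq_zero_add' (summable_prod_mul_and_tsum_le hrn hwn).1, prod_range_zero, one_mul]
  have hbound : Tendsto (fun n => 2 * B * r (n + 1)) atTop (𝓝 0) := by
    simpa using (hr.comp (tendsto_add_atTop_nat 1)).const_mul (2 * B)
  have hzero : Tendsto (fun n => ∑' k, (∏ j ∈ range (k + 1), r (n + 1 + j)) * w n (k + 1))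
      atTop (𝓝 0) :=
    tendsto_of_tendsto_of_tendsto_of_le_of_le' tendsto_const_nhds hbound
      (htail.mono fun n ⟨hrn, hwn⟩ => tsum_nonneg fun k =>
        mul_nonneg (prod_nonneg fun j _ => (hrn _ (by omega)).1) (hwn k).1)
      (htail.mono fun n ⟨hrn, hwn⟩ => (summable_prod_mul_and_tsum_le hrn hwn).2)
  simpa using (hw0.add hzero).congr' (hsplit.mono fun n hn => hn.symm)

theorem mul_tsum_div_prod_eq (lam mu : ℕ → ℝ) (n : ℕ) (hmu : ∀ j, 0 < mu (n + 1 + j)) :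
    mu (n + 1) * ∑' k, (∏ j ∈ range k, lam (n + 1 + j)) / ∏ j ∈ range (k + 1), mu (n + 1 + j) =
      ∑' k, (∏ j ∈ range k, lam (n + 1 + j) / mu (n + 1 + j)) * (mu (n + 1) / mu (n + 1 + k)) := by
  rw [← tsum_mul_left]
  congr 1 with k
  rw [prod_div_distrib, prod_range_succ]
  field_simp [(hmu k).ne', (prod_pos fun j _ => hmu j).ne']

theorem tendsto_mul_tsum_div_prod {lam mu : ℕ → ℝ} {C : ℝ}
    (hlam : ∀ n ≥ 1, 0 < lam n) (hmu : ∀ n ≥ 1, 0 < mu n)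
    (hC : ∀ n ≥ 1, ∀ i ≥ 1, mu n / mu (n + i) ≤ C)
    (hratio : Tendsto (fun n => lam n / mu n) atTop (𝓝 0)) :
    Tendsto (fun n => mu (n + 1) * ∑' k,
      (∏ j ∈ range k, lam (n + 1 + j)) / ∏ j ∈ range (k + 1), mu (n + 1 + j)) atTop (𝓝 1) := by
  refine (tendsto_tsum_prod_mul (r := fun j => lam j / mu j)
    (w := fun n k => mu (n + 1) / mu (n + 1 + k))
    (eventually_atTop.2 ⟨1, fun j hj => (div_pos (hlam j hj) (hmu j hj)).le⟩) hratio
    (Eventually.of_forall fun n k =>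
      ⟨(div_pos (hmu _ (by omega)) (hmu _ (by omega))).le, hC _ (by omega) _ (by omega)⟩)
    ?_).congr fun n => ?_
  · exact tendsto_const_nhds.congr fun n => by simp [(hmu (n + 1) (by omega)).ne']
  · rw [mul_tsum_div_prod_eq lam mu n fun j => hmu _ (by omega)]

theorem mul_nonneg_and_le_of_div_le {a b x C D : ℝ} (hb : 0 < b) (hC : a / b ≤ C)
    (ha : 0 ≤ a) (hx : 0 < b * x) (hxD : b * x < D) : 0 ≤ a * x ∧ a * x ≤ C * D := by
  have hfactor : a * x = a / b * (b * x) := by field_simp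
  rw [hfactor]
  exact ⟨by positivity, mul_le_mul hC hxD.le hx.le ((div_nonneg ha hb.le).trans hC)⟩

theorem stmt2_general (lam mu : ℕ → ℝ)
    (hlam : ∀ n ≥ 1, 0 < lam n) (hmu : ∀ n ≥ 1, 0 < mu n)
    (hsup : ∃ C : ℝ, ∀ n ≥ 1, ∀ i ≥ 1, mu n / mu (n + i) ≤ C)
    (hratio : Tendsto (fun n => lam n / mu n) atTop (nhds 0))
    (e M : ℕ → ℝ)
    (he : ∀ n, e n = ∑' k : ℕ,
      (∏ j ∈ Finset.range k, lam (n + 1 + j)) / (∏ j ∈ Finset.range (k + 1), mu (n + 1 + j)))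
    (hM : ∀ n ≥ 1, M n = 2 * ∑' k : ℕ,
      (∏ j ∈ Finset.range k, lam (n + 1 + j) / mu (n + 1 + j)) * (e (n + k)) ^ 2) :
    Tendsto (fun n => mu (n + 1) ^ 2 * M n) atTop (nhds 2) := by
  obtain ⟨C, hC⟩ := hsup
  have hr0 : ∀ᶠ j in atTop, 0 ≤ lam j / mu j :=
    eventually_atTop.2 ⟨1, fun j hj => (div_pos (hlam j hj) (hmu j hj)).le⟩
  have hE : Tendsto (fun n => mu (n + 1) * e n) atTop (𝓝 1) := by
    simpa only [he] using tendsto_mul_tsum_div_prod hlam hmu hC hratio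
  obtain ⟨N, hN⟩ := eventually_atTop.1 (hE.eventually (Ioo_mem_nhds zero_lt_one one_lt_two))
  have hM_scaled : ∀ n ≥ 1, mu (n + 1) ^ 2 * M n = 2 * ∑' k,
      (∏ j ∈ range k, lam (n + 1 + j) / mu (n + 1 + j)) * (mu (n + 1) * e (n + k)) ^ 2 := by
    intro n hn
    rw [hM n hn, mul_left_comm, ← tsum_mul_left]
    congr 2 with k
    ring
  have hsum : Tendsto (fun n => ∑' k, (∏ j ∈ range k, lam (n + 1 + j) / mu (n + 1 + j)) *
      (mu (n + 1) * e (n + k)) ^ 2) atTop (𝓝 1) := by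
    refine tendsto_tsum_prod_mul (r := fun j => lam j / mu j)
      (w := fun n k => (mu (n + 1) * e (n + k)) ^ 2) (B := (C * 2) ^ 2) hr0 hratio
      (eventually_atTop.2 ⟨N, fun n hn k => ?_⟩) (by simpa using hE.pow 2)
    obtain ⟨hpos, hlt⟩ := hN (n + (k + 1)) (by omega)
    rw [show n + (k + 1) + 1 = n + 1 + (k + 1) by omega] at hpos hlt
    obtain ⟨h0, hle⟩ := mul_nonneg_and_le_of_div_le (hmu _ (by omega))
      (hC _ (by omega) _ (by omega)) (hmu (n + 1) (by omega)).le hpos hlt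
    exact ⟨by positivity, pow_le_pow_left₀ h0 hle 2⟩
  rw [← mul_one (2 : ℝ)]
  exact (hsum.const_mul 2).congr' (eventually_atTop.2 ⟨1, fun n hn => (hM_scaled n hn).symm⟩)

/-- Under `sup_{n,i≥1} μ_n/μ_{n+i} < ∞`, `λ_n/μ_n → 0`, `λ_n > 0` and `Σ 1/μ_n < ∞`, the
second moment `M n = E_{n+1}(T_n²) = 2 Σ_{i≥n} (∏_{j=n+1}^{i} λ_j/μ_j)·e_i²` satisfies
`μ_{n+1}²·M_n → 2`, i.e. `M_n ~ 2/μ_{n+1}²`. -/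
theorem stmt2 (lam mu : ℕ → ℝ)
    (hlam : ∀ n ≥ 1, 0 < lam n) (hmu : ∀ n ≥ 1, 0 < mu n)
    (hsup : ∃ C : ℝ, ∀ n ≥ 1, ∀ i ≥ 1, mu n / mu (n + i) ≤ C)
    (hratio : Tendsto (fun n => lam n / mu n) atTop (nhds 0))
    (hsummu : Summable (fun n : ℕ => 1 / mu (n + 1)))
    (e M : ℕ → ℝ)
    (he : ∀ n, e n = ∑' k : ℕ,
      (∏ j ∈ Finset.range k, lam (n + 1 + j)) / (∏ j ∈ Finset.range (k + 1), mu (n + 1 + j)))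
    (hM : ∀ n ≥ 1, M n = 2 * ∑' k : ℕ,
      (∏ j ∈ Finset.range k, lam (n + 1 + j) / mu (n + 1 + j)) * (e (n + k)) ^ 2) :
    Tendsto (fun n => mu (n + 1) ^ 2 * M n) atTop (nhds 2) :=
  stmt2_general lam mu hlam hmu hsup hratio e M he hM
end

section
/- Let (τ_n)_{n≥0} be independent nonnegative square-integrable random variables with means m_n := E[τ_n] > 0 such that Σ_n m_n < ∞, sup_n E[τ_n²]/m_n² < ∞, and m_n/s_n → 0, where s_n := Σ_{k≥n} m_k. Then T_n/s_n → 1 in probability as n → ∞, where T_n := Σ_{k≥n} τ_k (almost surely finite). -/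
open Filter MeasureTheory ProbabilityTheory
open scoped Topology

/-! By Chebyshev's inequality it suffices to bound `E[(T n - s n)²]`. Independence gives
`E[(T n - s n)²] ≤ Σ_{k≥n} Var τ_k ≤ C Σ_{k≥n} m_k²`, first for the partial sums and then, by
Fatou's lemma, for `T n`. Since `s` is decreasing, `Σ_{k≥n} m_k² ≤ (sup_{k≥n} m_k / s_k) s_n²`,
so `P(|T n / s n - 1| ≥ ε) ≤ C ε⁻² sup_{k≥n} m_k / s_k → 0`. -/

section TailSums

variable {m : ℕ → ℝ}

lemma Summable.sq_of_nonneg (hm : ∀ n, 0 ≤ m n) (hsum : Summable m) :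
    Summable fun n => m n ^ 2 :=
  .of_nonneg_of_le (fun n => sq_nonneg _)
    (fun n => by nlinarith [hm n, hsum.le_tsum n fun k _ => hm k]) (hsum.mul_left (∑' k, m k))

lemma le_tsum_nat_add (hm : ∀ n, 0 ≤ m n) (hsum : Summable m) (n : ℕ) :
    m n ≤ ∑' k, m (n + k) := by
  simpa using (hsum.comp_injective (add_right_injective n)).le_tsum 0 fun k _ => hm (n + k)

lemma antitone_tsum_nat_add (hm : ∀ n, 0 ≤ m n) (hsum : Summable m) :
    Antitone fun n => ∑' k, m (n + k) := by
  refine antitone_nat_of_succ_le fun n => ?_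
  have htail : Summable fun k => m (n + k) := hsum.comp_injective (add_right_injective n)
  rw [htail.tsum_eq_zero_add]
  simp only [add_zero, ← add_assoc, add_right_comm n _ 1]
  linarith [hm n]

lemma tendsto_tsum_sq_div_sq_of_tendsto_div (hm : ∀ n, 0 < m n) (hsum : Summable m)
    (hratio : Tendsto (fun n => m n / ∑' k, m (n + k)) atTop (𝓝 0)) :
    Tendsto (fun n => (∑' k, m (n + k) ^ 2) / (∑' k, m (n + k)) ^ 2) atTop (𝓝 0) := by
  set s := fun n => ∑' k, m (n + k)
  have hm0 n := (hm n).le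
  have hms n : m n ≤ s n := le_tsum_nat_add hm0 hsum n
  have hs_pos n : 0 < s n := (hm n).trans_le (hms n)
  have htail n : Summable fun k => m (n + k) := hsum.comp_injective (add_right_injective n)
  have htail_sq n : Summable fun k => m (n + k) ^ 2 :=
    (hsum.sq_of_nonneg hm0).comp_injective (add_right_injective n)
  have hnonneg n : 0 ≤ (∑' k, m (n + k) ^ 2) / s n ^ 2 :=
    div_nonneg (tsum_nonneg fun k => sq_nonneg _) (sq_nonneg _)
  refine tendsto_order.2 ⟨fun a ha => .of_forall fun n => ha.trans_le (hnonneg n),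
    fun δ hδ => ?_⟩
  obtain ⟨N, hN⟩ := eventually_atTop.1 (hratio.eventually (Iic_mem_nhds (half_pos hδ)))
  filter_upwards [eventually_ge_atTop N] with n hn
  have hterm k : m (n + k) ^ 2 ≤ δ / 2 * s n * m (n + k) := by
    have h1 : m (n + k) ≤ δ / 2 * s (n + k) :=
      (div_le_iff₀ (hs_pos _)).1 (hN (n + k) (by omega))
    have h2 : s (n + k) ≤ s n := antitone_tsum_nat_add hm0 hsum (by omega)
    calc m (n + k) ^ 2 = m (n + k) * m (n + k) := sq _
      _ ≤ δ / 2 * s (n + k) * m (n + k) := by gcongr; exact hm0 _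
      _ ≤ δ / 2 * s n * m (n + k) := by gcongr; exact hm0 _
  have hsq : ∑' k, m (n + k) ^ 2 ≤ δ / 2 * s n ^ 2 :=
    calc ∑' k, m (n + k) ^ 2 ≤ ∑' k, δ / 2 * s n * m (n + k) :=
          (htail_sq n).tsum_le_tsum hterm ((htail n).mul_left _)
      _ = δ / 2 * s n ^ 2 := by rw [tsum_mul_left, sq, mul_assoc]
  calc (∑' k, m (n + k) ^ 2) / s n ^ 2 ≤ δ / 2 := by
        rwa [div_le_iff₀ (pow_pos (hs_pos n) 2)]
    _ < δ := half_lt_self hδ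

end TailSums

section Probability

variable {Ω : Type*} [MeasurableSpace Ω] {μ : Measure Ω}

lemma ae_summable_of_summable_integral {X : ℕ → Ω → ℝ} (hX0 : ∀ k, 0 ≤ X k)
    (hX : ∀ k, Integrable (X k) μ) (hsum : Summable fun k => μ[X k]) :
    ∀ᵐ ω ∂μ, Summable fun k => X k ω := by
  have hmeas k : AEMeasurable (fun ω => ENNReal.ofReal (X k ω)) μ :=
    (hX k).aemeasurable.ennreal_ofReal
  have hfinite : ∫⁻ ω, ∑' k, ENNReal.ofReal (X k ω) ∂μ ≠ ⊤ := by
    rw [lintegral_tsum hmeas]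
    simp_rw [← ofReal_integral_eq_lintegral_ofReal (hX _) (.of_forall (hX0 _)),
      ← ENNReal.ofReal_tsum_of_nonneg (fun k => integral_nonneg (hX0 k)) hsum]
    exact ENNReal.ofReal_ne_top
  filter_upwards [ae_lt_top' (AEMeasurable.tsum hmeas) hfinite] with ω hω
  exact (ENNReal.summable_toReal hω.ne).congr fun k => ENNReal.toReal_ofReal (hX0 k ω)

lemma lintegral_ofReal_le_of_tendsto_integral {f : ℕ → Ω → ℝ} {g : Ω → ℝ}
    (hf : ∀ N, Integrable (f N) μ) (hf0 : ∀ N, 0 ≤ᵐ[μ] f N)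
    (hlim : ∀ᵐ ω ∂μ, Tendsto (fun N => f N ω) atTop (𝓝 (g ω))) {c : ℝ}
    (hc : Tendsto (fun N => ∫ ω, f N ω ∂μ) atTop (𝓝 c)) :
    ∫⁻ ω, ENNReal.ofReal (g ω) ∂μ ≤ ENNReal.ofReal c :=
  calc ∫⁻ ω, ENNReal.ofReal (g ω) ∂μ
      = ∫⁻ ω, liminf (fun N => ENNReal.ofReal (f N ω)) atTop ∂μ :=
        lintegral_congr_ae <| hlim.mono fun _ h => (ENNReal.tendsto_ofReal h).liminf_eq.symm
    _ ≤ liminf (fun N => ∫⁻ ω, ENNReal.ofReal (f N ω) ∂μ) atTop :=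
        lintegral_liminf_le' fun N => (hf N).aemeasurable.ennreal_ofReal
    _ = ENNReal.ofReal c := by
        simp_rw [← ofReal_integral_eq_lintegral_ofReal (hf _) (hf0 _)]
        exact (ENNReal.tendsto_ofReal hc).liminf_eq

lemma integral_sub_const_sq [IsProbabilityMeasure μ] {X : Ω → ℝ} (hX : MemLp X 2 μ) (c : ℝ) :
    ∫ ω, (X ω - c) ^ 2 ∂μ = Var[X; μ] + (μ[X] - c) ^ 2 := by
  have h := variance_eq_sub (hX.sub (memLp_const c))
  rw [show X - (fun _ => c) = fun ω => X ω - c from rfl,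
    variance_sub_const hX.aestronglyMeasurable, integral_sub (hX.integrable one_le_two)
    (integrable_const c)] at h
  simp only [Pi.pow_apply, integral_const, probReal_univ, smul_eq_mul, one_mul] at h
  linarith

lemma lintegral_sq_sub_tsum_integral_le [IsProbabilityMeasure μ] {X : ℕ → Ω → ℝ}
    (hX : ∀ k, MemLp (X k) 2 μ) (hindep : iIndepFun X μ) (hmean : Summable fun k => μ[X k])
    (hvar : Summable fun k => Var[X k; μ]) {Y : Ω → ℝ}
    (hY : ∀ᵐ ω ∂μ, HasSum (fun k => X k ω) (Y ω)) :
    ∫⁻ ω, ENNReal.ofReal ((Y ω - ∑' k, μ[X k]) ^ 2) ∂μ ≤ ENNReal.ofReal (∑' k, Var[X k; μ]) := by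
  set c := ∑' k, μ[X k]
  have hS N : MemLp (∑ k ∈ Finset.range N, X k) 2 μ := memLp_finsetSum' _ fun k _ => hX k
  have hmoment N : ∫ ω, ((∑ k ∈ Finset.range N, X k) ω - c) ^ 2 ∂μ
      = ∑ k ∈ Finset.range N, Var[X k; μ] + (∑ k ∈ Finset.range N, μ[X k] - c) ^ 2 := by
    rw [integral_sub_const_sq (hS N),
      IndepFun.variance_sum (fun k _ => hX k) fun i _ j _ hij => hindep.indepFun hij,
      ← integral_finsetSum _ fun k _ => (hX k).integrable one_le_two, Finset.sum_fn]
  refine lintegral_ofReal_le_of_tendsto_integral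
    (f := fun N ω => ((∑ k ∈ Finset.range N, X k) ω - c) ^ 2)
    (fun N => ((hS N).sub (memLp_const c)).integrable_sq) (fun N => .of_forall fun _ => sq_nonneg _)
    (hY.mono fun ω h => ?_) ?_
  · simpa only [Finset.sum_apply] using (h.tendsto_sum_nat.sub_const c).pow 2
  · simp_rw [hmoment]
    simpa [c] using hvar.hasSum.tendsto_sum_nat.add
      ((hmean.hasSum.tendsto_sum_nat.sub_const c).pow 2)

lemma measure_le_abs_div_sub_one_le {Y : Ω → ℝ} (hY : AEMeasurable Y μ) {s ε V : ℝ}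
    (hs : 0 < s) (hε : 0 < ε) (hV : ∫⁻ ω, ENNReal.ofReal ((Y ω - s) ^ 2) ∂μ ≤ ENNReal.ofReal V) :
    μ {ω | ε ≤ |Y ω / s - 1|} ≤ ENNReal.ofReal (V / (ε * s) ^ 2) := by
  have hεs : 0 < (ε * s) ^ 2 := by positivity
  have hsubset : {ω | ε ≤ |Y ω / s - 1|}
      ⊆ {ω | ENNReal.ofReal ((ε * s) ^ 2) ≤ ENNReal.ofReal ((Y ω - s) ^ 2)} := by
    intro ω (hω : ε ≤ |Y ω / s - 1|)
    have h : ε * s ≤ |Y ω - s| := by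
      rwa [div_sub_one hs.ne', abs_div, abs_of_pos hs, le_div_iff₀ hs] at hω
    exact ENNReal.ofReal_le_ofReal (sq_abs (Y ω - s) ▸ pow_le_pow_left₀ (by positivity) h 2)
  calc μ {ω | ε ≤ |Y ω / s - 1|}
      ≤ (∫⁻ ω, ENNReal.ofReal ((Y ω - s) ^ 2) ∂μ) / ENNReal.ofReal ((ε * s) ^ 2) :=
        (measure_mono hsubset).trans <| meas_ge_le_lintegral_div
          ((hY.sub_const s).pow_const 2).ennreal_ofReal (ENNReal.ofReal_pos.2 hεs).ne'
          ENNReal.ofReal_ne_top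
    _ ≤ ENNReal.ofReal V / ENNReal.ofReal ((ε * s) ^ 2) := by gcongr
    _ = ENNReal.ofReal (V / (ε * s) ^ 2) := (ENNReal.ofReal_div_of_pos hεs).symm

lemma measure_le_abs_tsum_div_tsum_integral_sub_one_le [IsProbabilityMeasure μ]
    {X : ℕ → Ω → ℝ} (hX0 : ∀ k, 0 ≤ X k) (hX : ∀ k, MemLp (X k) 2 μ) (hindep : iIndepFun X μ)
    (hmean : Summable fun k => μ[X k]) (hpos : 0 < ∑' k, μ[X k]) {C : ℝ}
    (hvar : ∀ k, Var[X k; μ] ≤ C * μ[X k] ^ 2) {ε : ℝ} (hε : 0 < ε) :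
    μ {ω | ε ≤ |(∑' k, X k ω) / (∑' k, μ[X k]) - 1|}
      ≤ ENNReal.ofReal (C / ε ^ 2 * ((∑' k, μ[X k] ^ 2) / (∑' k, μ[X k]) ^ 2)) := by
  have hint k : Integrable (X k) μ := (hX k).integrable one_le_two
  have hsq : Summable fun k => μ[X k] ^ 2 :=
    hmean.sq_of_nonneg fun k => integral_nonneg (hX0 k)
  have hvar_summable : Summable fun k => Var[X k; μ] :=
    .of_nonneg_of_le (fun k => variance_nonneg _ _) hvar (hsq.mul_left C)
  have hvar_le : ∑' k, Var[X k; μ] ≤ C * ∑' k, μ[X k] ^ 2 :=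
    (hvar_summable.tsum_le_tsum hvar (hsq.mul_left C)).trans_eq tsum_mul_left
  have hsecond := lintegral_sq_sub_tsum_integral_le hX hindep hmean hvar_summable
    ((ae_summable_of_summable_integral hX0 hint hmean).mono fun _ h => h.hasSum)
  convert measure_le_abs_div_sub_one_le (AEMeasurable.tsum fun k => (hint k).aemeasurable) hpos hε
    (hsecond.trans (ENNReal.ofReal_le_ofReal hvar_le)) using 2
  ring

end Probability

/-- Gradual regime, weak law of large numbers: if the `τ_n` are independent nonnegative
square-integrable with means `m_n > 0`, `Σ m_n < ∞`, `sup_n E[τ_n²]/m_n² < ∞` and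
`m_n/s_n → 0`, then `T_n/s_n → 1` in probability, where `T_n = Σ_{k≥n} τ_k` and
`s_n = Σ_{k≥n} m_k`. -/
theorem stmt7 {Ω : Type*} [MeasurableSpace Ω] (P : Measure Ω) [IsProbabilityMeasure P]
    (τ : ℕ → Ω → ℝ) (hτpos : ∀ n, ∀ ω, 0 ≤ τ n ω)
    (hL2 : ∀ n, MemLp (τ n) 2 P)
    (hindep : iIndepFun τ P)
    (m : ℕ → ℝ) (hm : ∀ n, m n = ∫ ω, τ n ω ∂P) (hmpos : ∀ n, 0 < m n)
    (hsum : Summable m)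
    (s : ℕ → ℝ) (hs : ∀ n, s n = ∑' k : ℕ, m (n + k))
    (hmom2 : ∃ C : ℝ, ∀ n, (∫ ω, (τ n ω) ^ 2 ∂P) / (m n) ^ 2 ≤ C)
    (hratio : Tendsto (fun n => m n / s n) atTop (nhds 0))
    (T : ℕ → Ω → ℝ) (hT : ∀ n ω, T n ω = ∑' k : ℕ, τ (n + k) ω) :
    ∀ ε > 0, Tendsto (fun n => P {ω | ε ≤ |T n ω / s n - 1|}) atTop (nhds 0) := by
  intro ε hε
  obtain rfl : m = fun n => ∫ ω, τ n ω ∂P := funext hm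
  obtain rfl : s = fun n => ∑' k, ∫ ω, τ (n + k) ω ∂P := funext hs
  obtain rfl : T = fun n ω => ∑' k, τ (n + k) ω := funext fun n => funext (hT n)
  obtain ⟨C, hC⟩ := hmom2
  have hvar k : Var[τ k; P] ≤ C * (∫ ω, τ k ω ∂P) ^ 2 :=
    (variance_le_expectation_sq (hL2 k).aestronglyMeasurable).trans <|
      (div_le_iff₀ (pow_pos (hmpos k) 2)).1 (hC k)
  have hbound n := measure_le_abs_tsum_div_tsum_integral_sub_one_le
    (X := fun k => τ (n + k)) (fun k => hτpos (n + k)) (fun k => hL2 (n + k))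
    (hindep.precomp (add_right_injective n)) (hsum.comp_injective (add_right_injective n))
    ((hmpos n).trans_le (le_tsum_nat_add (fun k => (hmpos k).le) hsum n)) (fun k => hvar (n + k)) hε
  refine tendsto_of_tendsto_of_tendsto_of_le_of_le tendsto_const_nhds ?_ (fun n => zero_le) hbound
  simpa using ENNReal.tendsto_ofReal
    ((tendsto_tsum_sq_div_sq_of_tendsto_div hmpos hsum hratio).const_mul (C / ε ^ 2))
end

section
/- Let (T_n)_{n≥0} be random variables on a probability space that are almost surely nonincreasing in n and converge to 0 almost surely, and let (s_n)_{n≥0} be positive reals strictly decreasing to 0. Define Y(t) := inf{ n ≥ 0 : T_n ≤ t } and v(t) := inf{ n ≥ 0 : s_n ≤ t } for t > 0. Assume (i) the sequence (T_n/s_n) is tight on (0,∞), i.e. for every ε > 0 there exist 0 < A ≤ B such that P(A ≤ T_n/s_n ≤ B) ≥ 1 − ε for all n; and (ii) for every x > 1, s_{⌊nx⌋}/s_n → 0 as n → ∞. Then Y(t)/v(t) → 1 in probability as t → 0⁺. -/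
/-!
Fix `ε > 0` and put `v = v(t)`, `m₀ = ⌊v / (1 + ε)⌋` and `m₁ = ⌊(1 + ε/2) v⌋`. By tightness, outside
an event of small probability both `T_{m₀} ≥ A s_{m₀}` and `T_{m₁} ≤ B s_{m₁}`. The fast decay of `s`
makes `B s_{m₁} < s_v ≤ t` and `t < s_{⌊(1 + ε/2) m₀⌋} < A s_{m₀}` once `t` is small, because
`⌊(1 + ε/2) m₀⌋ < v`. Since `T` is nonincreasing, `T_{m₁} ≤ t < T_{m₀}` squeezes `Y(t)` into
`(m₀, m₁]`, hence `|Y(t)/v(t) - 1| < ε`.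
-/

open Filter MeasureTheory Set Topology

section FirstPassage

variable {α : Type*} [LinearOrder α] {f : ℕ → α} {t : α}

theorem lt_sInf_setOf_le_iff (hf : Antitone f) (hne : ∃ n, f n ≤ t) {m : ℕ} :
    m < sInf {n | f n ≤ t} ↔ t < f m := by
  constructor
  · intro h
    by_contra! hm
    exact (Nat.sInf_le hm).not_gt h
  · intro hm
    by_contra! h
    exact ((hf h).trans (Nat.sInf_mem hne)).not_gt hm

theorem sInf_setOf_le_mem_Ioc (hf : Antitone f) {m₀ m₁ : ℕ} (h₀ : t < f m₀) (h₁ : f m₁ ≤ t) :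
    sInf {n | f n ≤ t} ∈ Ioc m₀ m₁ :=
  ⟨(lt_sInf_setOf_le_iff hf ⟨m₁, h₁⟩).2 h₀, Nat.sInf_le h₁⟩

end FirstPassage

theorem tendsto_nhds_zero_of_eventually_le_ofReal_add_ofReal {α : Type*} {l : Filter α}
    {f : α → ENNReal}
    (h : ∀ η : ℝ, 0 < η → ∀ᶠ a in l, f a ≤ ENNReal.ofReal η + ENNReal.ofReal η) :
    Tendsto f l (𝓝 0) := by
  rw [ENNReal.tendsto_nhds_zero]
  intro δ hδ
  obtain ⟨η, -, hηpos, hηδ⟩ := ENNReal.lt_iff_exists_real_btwn.1 (ENNReal.half_pos hδ.ne')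
  filter_upwards [h η (ENNReal.ofReal_pos.1 hηpos)] with a ha
  exact (ha.trans (add_le_add hηδ.le hηδ.le)).trans (ENNReal.add_halves δ).le

theorem abs_div_sub_one_lt_of_mem_Ioc {Y v : ℕ} {ε : ℝ} (hε : 0 < ε) (hv : 0 < v)
    (hY : Y ∈ Ioc ⌊(v : ℝ) * (1 + ε)⁻¹⌋₊ ⌊(v : ℝ) * (1 + ε / 2)⌋₊) :
    |(Y : ℝ) / v - 1| < ε := by
  have hv' : (0 : ℝ) < v := Nat.cast_pos.2 hv
  have hlow : (1 + ε)⁻¹ < (Y : ℝ) / v := by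
    rw [lt_div_iff₀ hv', mul_comm]
    exact (Nat.floor_lt (by positivity)).1 hY.1
  have hup : (Y : ℝ) / v ≤ 1 + ε / 2 := by
    rw [div_le_iff₀ hv', mul_comm]
    exact (Nat.le_floor_iff (by positivity)).1 hY.2
  have hinv : 1 - ε < (1 + ε)⁻¹ := by
    rw [← one_div, lt_div_iff₀ (by linarith)]
    nlinarith
  rw [abs_sub_lt_iff]
  constructor <;> linarith

section Speed

variable {s : ℕ → ℝ}

theorem tendsto_sInf_setOf_le_atTop (hspos : ∀ n, 0 < s n) (hsanti : Antitone s)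
    (hs0 : Tendsto s atTop (𝓝 0)) :
    Tendsto (fun t => sInf {n | s n ≤ t}) (𝓝[>] 0) atTop := by
  refine tendsto_atTop.2 fun N => ?_
  filter_upwards [Ioo_mem_nhdsGT (hspos N)] with t ⟨ht0, htN⟩
  exact ((lt_sInf_setOf_le_iff hsanti (hs0.eventually_le_const ht0).exists).2 htN).le

theorem eventually_lt_mul_of_tendsto_div_zero {k : ℕ → ℕ} (hspos : ∀ n, 0 < s n) {c : ℝ}
    (hc : 0 < c) (hk : Tendsto (fun n => s (k n) / s n) atTop (𝓝 0)) :
    ∀ᶠ n in atTop, s (k n) < c * s n :=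
  (hk.eventually_lt_const hc).mono fun n hn => (div_lt_iff₀ (hspos n)).1 hn

theorem eventually_mul_apply_floor_mul_le (hspos : ∀ n, 0 < s n) (hsanti : Antitone s)
    (hs0 : Tendsto s atTop (𝓝 0)) {x B : ℝ} (hB : 0 < B)
    (hfast : Tendsto (fun n : ℕ => s ⌊(n : ℝ) * x⌋₊ / s n) atTop (𝓝 0)) :
    ∀ᶠ t in 𝓝[>] 0, B * s ⌊((sInf {n | s n ≤ t} : ℕ) : ℝ) * x⌋₊ ≤ t := by
  filter_upwards [(tendsto_sInf_setOf_le_atTop hspos hsanti hs0).eventually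
      (eventually_lt_mul_of_tendsto_div_zero hspos (inv_pos.2 hB) hfast), self_mem_nhdsWithin]
    with t hlt (ht : 0 < t)
  calc B * s ⌊((sInf {n | s n ≤ t} : ℕ) : ℝ) * x⌋₊ ≤ B * (B⁻¹ * s (sInf {n | s n ≤ t})) := by
        gcongr
    _ = s (sInf {n | s n ≤ t}) := by field_simp
    _ ≤ t := Nat.sInf_mem (hs0.eventually_le_const ht).exists

theorem eventually_lt_mul_apply_floor_mul (hspos : ∀ n, 0 < s n) (hsanti : Antitone s)
    (hs0 : Tendsto s atTop (𝓝 0)) {x y A : ℝ} (hA : 0 < A) (hx₀ : 0 ≤ x) (hy : 0 < y)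
    (hyx : y * x < 1) (hfast : Tendsto (fun n : ℕ => s ⌊(n : ℝ) * x⌋₊ / s n) atTop (𝓝 0)) :
    ∀ᶠ t in 𝓝[>] 0, t < A * s ⌊((sInf {n | s n ≤ t} : ℕ) : ℝ) * y⌋₊ := by
  have hv := tendsto_sInf_setOf_le_atTop hspos hsanti hs0
  have hm : Tendsto (fun t => ⌊((sInf {n | s n ≤ t} : ℕ) : ℝ) * y⌋₊) (𝓝[>] 0) atTop :=
    tendsto_nat_floor_atTop.comp ((tendsto_natCast_atTop_atTop.comp hv).atTop_mul_const hy)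
  filter_upwards [hm.eventually (eventually_lt_mul_of_tendsto_div_zero hspos hA hfast),
    hv.eventually_gt_atTop 0, self_mem_nhdsWithin] with t hlt hvpos (ht : 0 < t)
  set v := sInf {n | s n ≤ t}
  set m := ⌊(v : ℝ) * y⌋₊
  have hk : ⌊(m : ℝ) * x⌋₊ < v := by
    have hmv : (m : ℝ) ≤ v * y := Nat.floor_le (by positivity)
    have hv' : (0 : ℝ) < v := Nat.cast_pos.2 hvpos
    rw [Nat.floor_lt' hvpos.ne']
    nlinarith
  calc t < s ⌊(m : ℝ) * x⌋₊ := (lt_sInf_setOf_le_iff hsanti (hs0.eventually_le_const ht).exists).1 hk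
    _ < A * s m := hlt

end Speed

theorem stmt10_general {Ω : Type*} [MeasurableSpace Ω] (P : Measure Ω)
    (T : ℕ → Ω → ℝ)
    (hmono : ∀ᵐ ω ∂P, ∀ n, T (n + 1) ω ≤ T n ω)
    (s : ℕ → ℝ) (hspos : ∀ n, 0 < s n) (hsanti : StrictAnti s)
    (hs0 : Tendsto s atTop (nhds 0))
    (Y : ℝ → Ω → ℕ) (hY : ∀ t ω, Y t ω = sInf {n : ℕ | T n ω ≤ t})
    (v : ℝ → ℕ) (hv : ∀ t, v t = sInf {n : ℕ | s n ≤ t})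
    (htight : ∀ ε : ℝ, 0 < ε → ∃ A B : ℝ, 0 < A ∧ A ≤ B ∧
      ∀ n, P {ω | ¬(A ≤ T n ω / s n ∧ T n ω / s n ≤ B)} ≤ ENNReal.ofReal ε)
    (hfast : ∀ x : ℝ, 1 < x →
      Tendsto (fun n : ℕ => s ⌊(n : ℝ) * x⌋₊ / s n) atTop (nhds 0)) :
    ∀ ε > 0, Tendsto (fun t => P {ω | ε ≤ |((Y t ω : ℝ) / (v t : ℝ)) - 1|})
      (nhdsWithin 0 (Set.Ioi 0)) (nhds 0) := by
  intro ε hε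
  obtain rfl : v = fun t => sInf {n | s n ≤ t} := funext hv
  refine tendsto_nhds_zero_of_eventually_le_ofReal_add_ofReal fun η hη => ?_
  obtain ⟨A, B, hA, hAB, hbound⟩ := htight η hη
  have hx : 1 < 1 + ε / 2 := by linarith
  have hyx : (1 + ε)⁻¹ * (1 + ε / 2) < 1 := by
    rw [inv_mul_lt_iff₀ (by positivity)]
    linarith
  filter_upwards [eventually_lt_mul_apply_floor_mul hspos hsanti.antitone hs0 hA (by positivity)
      (by positivity) hyx (hfast _ hx),
    eventually_mul_apply_floor_mul_le hspos hsanti.antitone hs0 (hA.trans_le hAB) (hfast _ hx),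
    (tendsto_sInf_setOf_le_atTop hspos hsanti.antitone hs0).eventually_gt_atTop 0]
    with t h₀ h₁ hvpos
  set m₀ := ⌊((sInf {n | s n ≤ t} : ℕ) : ℝ) * (1 + ε)⁻¹⌋₊
  set m₁ := ⌊((sInf {n | s n ≤ t} : ℕ) : ℝ) * (1 + ε / 2)⌋₊
  have hsub : {ω | ε ≤ |((Y t ω : ℝ) / (sInf {n | s n ≤ t} : ℕ)) - 1|} ≤ᵐ[P]
      ({ω | ¬(A ≤ T m₀ ω / s m₀ ∧ T m₀ ω / s m₀ ≤ B)} ∪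
        {ω | ¬(A ≤ T m₁ ω / s m₁ ∧ T m₁ ω / s m₁ ≤ B)} : Set Ω) := by
    filter_upwards [hmono] with ω hω hbad
    by_contra hgood
    change ω ∉ (_ ∪ _ : Set Ω) at hgood
    simp only [mem_union, mem_ofPred_eq, not_or, not_not] at hgood
    obtain ⟨⟨hA₀, -⟩, -, hB₁⟩ := hgood
    have hT₀ : t < T m₀ ω := h₀.trans_le ((le_div_iff₀ (hspos _)).1 hA₀)
    have hT₁ : T m₁ ω ≤ t := ((div_le_iff₀ (hspos _)).1 hB₁).trans h₁
    have hYmem := sInf_setOf_le_mem_Ioc (f := (T · ω)) (antitone_nat_of_succ_le hω) hT₀ hT₁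
    rw [← hY] at hYmem
    exact (abs_div_sub_one_lt_of_mem_Ioc hε hvpos hYmem).not_ge hbad
  calc _ ≤ P (_ ∪ _) := measure_mono_ae hsub
    _ ≤ _ := measure_union_le _ _
    _ ≤ _ := add_le_add (hbound m₀) (hbound m₁)

/-- Fast regime inversion: if `(T_n/s_n)` is tight on `(0,∞)` and `s_{⌊nx⌋}/s_n → 0` for
every `x > 1`, then `Y(t)/v(t) → 1` in probability as `t → 0⁺`, where
`Y(t) = inf{n : T_n ≤ t}` and `v(t) = inf{n : s_n ≤ t}`. -/
theorem stmt10 {Ω : Type*} [MeasurableSpace Ω] (P : Measure Ω) [IsProbabilityMeasure P]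
    (T : ℕ → Ω → ℝ)
    (hmono : ∀ᵐ ω ∂P, ∀ n, T (n + 1) ω ≤ T n ω)
    (hlim : ∀ᵐ ω ∂P, Tendsto (fun n => T n ω) atTop (nhds 0))
    (s : ℕ → ℝ) (hspos : ∀ n, 0 < s n) (hsanti : StrictAnti s)
    (hs0 : Tendsto s atTop (nhds 0))
    (Y : ℝ → Ω → ℕ) (hY : ∀ t ω, Y t ω = sInf {n : ℕ | T n ω ≤ t})
    (v : ℝ → ℕ) (hv : ∀ t, v t = sInf {n : ℕ | s n ≤ t})
    (htight : ∀ ε : ℝ, 0 < ε → ∃ A B : ℝ, 0 < A ∧ A ≤ B ∧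
      ∀ n, P {ω | ¬(A ≤ T n ω / s n ∧ T n ω / s n ≤ B)} ≤ ENNReal.ofReal ε)
    (hfast : ∀ x : ℝ, 1 < x →
      Tendsto (fun n : ℕ => s ⌊(n : ℝ) * x⌋₊ / s n) atTop (nhds 0)) :
    ∀ ε > 0, Tendsto (fun t => P {ω | ε ≤ |((Y t ω : ℝ) / (v t : ℝ)) - 1|})
      (nhdsWithin 0 (Set.Ioi 0)) (nhds 0) :=
  stmt10_general P T hmono s hspos hsanti hs0 Y hY v hv htight hfast
end

section
/- Let (T_n)_{n≥0} be random variables on a probability space that are almost surely nonincreasing in n and converge to 0 almost surely, and let (s_n)_{n≥0} be positive reals strictly decreasing to 0. Define Y(t) := inf{ n ≥ 0 : T_n ≤ t } and v(t) := inf{ n ≥ 0 : s_n ≤ t } for t > 0. Assume (i) T_n/s_n → 1 in probability as n → ∞; and (ii) for every x > 1, limsup_{n→∞} s_{⌊nx⌋}/s_n < 1. Then Y(t)/v(t) → 1 in probability as t → 0⁺. -/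
open Filter MeasureTheory Set

set_option maxHeartbeats 1000000 in
/-- Gradual regime inversion: if `T_n/s_n → 1` in probability and
`limsup_n s_{⌊nx⌋}/s_n < 1` for every `x > 1`, then `Y(t)/v(t) → 1` in probability as
`t → 0⁺`, where `Y(t) = inf{n : T_n ≤ t}` and `v(t) = inf{n : s_n ≤ t}`. -/
theorem stmt11 {Ω : Type*} [MeasurableSpace Ω] (P : Measure Ω) [IsProbabilityMeasure P]
    (T : ℕ → Ω → ℝ)
    (hmono : ∀ᵐ ω ∂P, ∀ n, T (n + 1) ω ≤ T n ω)
    (hlim : ∀ᵐ ω ∂P, Tendsto (fun n => T n ω) atTop (nhds 0))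
    (s : ℕ → ℝ) (hspos : ∀ n, 0 < s n) (hsanti : StrictAnti s)
    (hs0 : Tendsto s atTop (nhds 0))
    (Y : ℝ → Ω → ℕ) (hY : ∀ t ω, Y t ω = sInf {n : ℕ | T n ω ≤ t})
    (v : ℝ → ℕ) (hv : ∀ t, v t = sInf {n : ℕ | s n ≤ t})
    (hprob : ∀ ε > 0, Tendsto (fun n => P {ω | ε ≤ |T n ω / s n - 1|}) atTop (nhds 0))
    (hgrad : ∀ x : ℝ, 1 < x →
      Filter.limsup (fun n : ℕ => s ⌊(n : ℝ) * x⌋₊ / s n) atTop < 1) :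
    ∀ ε > 0, Tendsto (fun t => P {ω | ε ≤ |((Y t ω : ℝ) / (v t : ℝ)) - 1|})
      (nhdsWithin 0 (Set.Ioi 0)) (nhds 0) := by
  -- Step 1: from the limsup condition, extract eventual ratio bounds.
  have hub : ∀ x : ℝ, 1 < x → ∃ c : ℝ, c < 1 ∧
      ∀ᶠ n : ℕ in atTop, s ⌊(n : ℝ) * x⌋₊ ≤ c * s n := by
    intro x hx
    set L := limsup (fun n : ℕ => s ⌊(n : ℝ) * x⌋₊ / s n) atTop with hL
    have hL1 : L < 1 := hgrad x hx
    refine ⟨(L + 1) / 2, by linarith, ?_⟩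
    have hb : IsBoundedUnder (· ≤ ·) atTop (fun n : ℕ => s ⌊(n : ℝ) * x⌋₊ / s n) := by
      refine isBoundedUnder_of ⟨1, fun n => ?_⟩
      have h1 : (n : ℝ) ≤ (n : ℝ) * x := le_mul_of_one_le_right (Nat.cast_nonneg n) hx.le
      have h2 : n ≤ ⌊(n : ℝ) * x⌋₊ := Nat.le_floor h1
      exact div_le_one_of_le₀ (hsanti.antitone h2) (hspos n).le
    have hev := eventually_lt_of_limsup_lt (show L < (L + 1) / 2 by linarith) hb
    filter_upwards [hev] with n hn
    rw [div_lt_iff₀ (hspos n)] at hn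
    linarith
  -- Step 2: main statement for small ε.
  have key : ∀ ε : ℝ, 0 < ε → ε ≤ 1 / 2 →
      Tendsto (fun t => P {ω | ε ≤ |((Y t ω : ℝ) / (v t : ℝ)) - 1|})
        (nhdsWithin 0 (Set.Ioi 0)) (nhds 0) := by
    intro ε hε hεh
    rw [ENNReal.tendsto_nhds_zero]
    intro δ hδ
    obtain ⟨c₁, hc₁, hev₁⟩ := hub (1 + ε / 2) (by linarith)
    have hx₂den : (0 : ℝ) < 4 - 2 * ε := by linarith
    have hx₂ : 1 < (4 - ε) / (4 - 2 * ε) := by rw [lt_div_iff₀ hx₂den]; linarith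
    obtain ⟨c₂, hc₂, hev₂⟩ := hub ((4 - ε) / (4 - 2 * ε)) hx₂
    obtain ⟨N₁, hN₁⟩ := eventually_atTop.mp hev₁
    obtain ⟨N₂, hN₂⟩ := eventually_atTop.mp hev₂
    set c : ℝ := max (max c₁ c₂) (1 / 2) with hc
    have hclt : c < 1 := by
      rw [hc, max_lt_iff, max_lt_iff]; exact ⟨⟨hc₁, hc₂⟩, by norm_num⟩
    have hcge : (1 : ℝ) / 2 ≤ c := le_max_right _ _
    have hcc₁ : c₁ ≤ c := le_trans (le_max_left _ _) (le_max_left _ _)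
    have hcc₂ : c₂ ≤ c := le_trans (le_max_right _ _) (le_max_left _ _)
    set η := (1 - c) / 2 with hη
    have hηpos : 0 < η := by rw [hη]; linarith
    obtain ⟨M, hM⟩ := ENNReal.tendsto_atTop_zero.mp (hprob η hηpos) (δ / 2)
      (ENNReal.half_pos hδ.ne')
    clear_value c η
    set K := max (max N₁ (2 * N₂)) (max (2 * M) (⌈8 / ε⌉₊ + 1)) with hK
    filter_upwards [mem_nhdsWithin_of_mem_nhds (Iio_mem_nhds (hspos K)),
      self_mem_nhdsWithin] with t htK ht
    simp only [Set.mem_Iio] at htK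
    simp only [Set.mem_Ioi] at ht
    -- basic facts about v t
    have hvne : Set.Nonempty {n : ℕ | s n ≤ t} := by
      obtain ⟨n, hn⟩ := (hs0.eventually_lt_const ht).exists
      exact ⟨n, hn.le⟩
    set V := v t with hV
    have hVmem : s V ≤ t := by rw [hV, hv]; exact Nat.sInf_mem hvne
    have hKV : K < V := hsanti.lt_iff_gt.mp (lt_of_le_of_lt hVmem htK)
    have hVpos : 0 < V := lt_of_le_of_lt (Nat.zero_le K) hKV
    have hVN₁ : N₁ ≤ V := le_trans (le_trans (le_max_left _ _) (le_max_left _ _)) hKV.le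
    have hVN₂ : 2 * N₂ ≤ V := le_trans (le_trans (le_max_right _ _) (le_max_left _ _)) hKV.le
    have hVM : 2 * M ≤ V := le_trans (le_trans (le_max_left _ _) (le_max_right _ _)) hKV.le
    have hVceil : ⌈8 / ε⌉₊ + 1 ≤ V :=
      le_trans (le_trans (le_max_right _ _) (le_max_right _ _)) hKV.le
    clear_value K
    have hVr : (0 : ℝ) < (V : ℝ) := by exact_mod_cast hVpos
    have hεV : 8 < ε * (V : ℝ) := by
      have h3 : ((⌈8 / ε⌉₊ : ℝ)) + 1 ≤ (V : ℝ) := by exact_mod_cast hVceil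
      have h4 : 8 / ε < (V : ℝ) := lt_of_lt_of_le (by linarith [Nat.le_ceil (8 / ε)]) le_rfl
      rw [div_lt_iff₀ hε] at h4
      nlinarith
    set mp := ⌊(V : ℝ) * (1 + ε / 2)⌋₊ with hmpdef
    set mm := ⌈(1 - ε / 2) * (V : ℝ)⌉₊ with hmmdef
    have hmmge : (1 - ε / 2) * (V : ℝ) ≤ (mm : ℝ) := Nat.le_ceil _
    have hmmlt : (mm : ℝ) < (1 - ε / 2) * (V : ℝ) + 1 :=
      Nat.ceil_lt_add_one (mul_nonneg (by linarith) hVr.le)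
    have hmpgeV : V ≤ mp := Nat.le_floor (le_mul_of_one_le_right hVr.le (by linarith))
    have hmple : (mp : ℝ) ≤ (V : ℝ) * (1 + ε / 2) := Nat.floor_le (mul_nonneg hVr.le (by linarith))
    have hmmreal : ∀ k : ℕ, 2 * k ≤ V → k ≤ mm := by
      intro k hk
      have h2 : 2 * (k : ℝ) ≤ (V : ℝ) := by exact_mod_cast hk
      have hk' : (k : ℝ) ≤ (mm : ℝ) := by nlinarith
      exact_mod_cast hk'
    have hmmN₂ : N₂ ≤ mm := hmmreal N₂ hVN₂
    have hmmM : M ≤ mm := hmmreal M hVM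
    have hmpM : M ≤ mp := le_trans (le_trans (by omega : M ≤ 2 * M) hVM) hmpgeV
    -- the floor index for the lower bound lies below V
    have hx₂pos : (0 : ℝ) < (4 - ε) / (4 - 2 * ε) := by positivity
    have hx₂lt2 : (4 - ε) / (4 - 2 * ε) < 2 := by rw [div_lt_iff₀ hx₂den]; linarith
    have hx₂id : (1 - ε / 2) * ((4 - ε) / (4 - 2 * ε)) = 1 - ε / 4 := by
      rw [mul_div_assoc', div_eq_iff hx₂den.ne']
      ring
    have hmmx₂ : (mm : ℝ) * ((4 - ε) / (4 - 2 * ε)) < (V : ℝ) := by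
      have h1 : (mm : ℝ) * ((4 - ε) / (4 - 2 * ε)) <
          ((1 - ε / 2) * (V : ℝ) + 1) * ((4 - ε) / (4 - 2 * ε)) :=
        mul_lt_mul_of_pos_right hmmlt hx₂pos
      have h2 : ((1 - ε / 2) * (V : ℝ) + 1) * ((4 - ε) / (4 - 2 * ε)) =
          (1 - ε / 4) * (V : ℝ) + (4 - ε) / (4 - 2 * ε) := by
        linear_combination (V : ℝ) * hx₂id
      rw [h2] at h1
      linarith
    have hfloorV : ⌊(mm : ℝ) * ((4 - ε) / (4 - 2 * ε))⌋₊ < V :=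
      (Nat.floor_lt (mul_nonneg (Nat.cast_nonneg _) hx₂pos.le)).mpr hmmx₂
    have hsV1 : s (V - 1) ≤ s ⌊(mm : ℝ) * ((4 - ε) / (4 - 2 * ε))⌋₊ :=
      hsanti.antitone (Nat.le_sub_one_of_lt hfloorV)
    have htV1 : t < s (V - 1) := by
      have hne : (V - 1) ∉ {n : ℕ | s n ≤ t} := by
        apply Nat.notMem_of_lt_sInf
        rw [← hv, ← hV]
        exact Nat.sub_lt hVpos one_pos
      simpa using not_le.mp hne
    have hgrad₁ : s mp ≤ c₁ * s V := hN₁ V hVN₁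
    have hgrad₂ : s ⌊(mm : ℝ) * ((4 - ε) / (4 - 2 * ε))⌋₊ ≤ c₂ * s mm := hN₂ mm hmmN₂
    clear_value V mp mm
    -- the almost sure good set
    have hGzero : P {ω | ¬ ((∀ n, T (n + 1) ω ≤ T n ω) ∧
        Tendsto (fun n => T n ω) atTop (nhds 0))} = 0 := by
      exact ae_iff.mp (hmono.and hlim)
    -- inclusion of the bad event
    have hsub : {ω | ε ≤ |((Y t ω : ℝ) / (V : ℝ)) - 1|} ⊆
        ({ω | η ≤ |T mp ω / s mp - 1|} ∪ {ω | η ≤ |T mm ω / s mm - 1|}) ∪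
        {ω | ¬ ((∀ n, T (n + 1) ω ≤ T n ω) ∧ Tendsto (fun n => T n ω) atTop (nhds 0))} := by
      intro ω hω
      simp only [Set.mem_setOf_eq] at hω
      by_contra hcon
      simp only [Set.mem_union, Set.mem_setOf_eq, not_or, not_le, not_not] at hcon
      obtain ⟨⟨hp, hm⟩, hmonoω, hlimω⟩ := hcon
      have hAnti : Antitone fun n => T n ω := antitone_nat_of_succ_le hmonoω
      have hTne : ∃ n, T n ω ≤ t := by
        obtain ⟨n, hn⟩ := (hlimω.eventually_lt_const ht).exists
        exact ⟨n, hn.le⟩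
      have hYmem : T (Y t ω) ω ≤ t := by rw [hY]; exact Nat.sInf_mem hTne
      -- upper bound:  Y t ω ≤ mp
      have hTp : T mp ω < (1 + η) * s mp := by
        have h2 : T mp ω / s mp - 1 < η := (abs_lt.mp hp).2
        have h3 : T mp ω / s mp < 1 + η := by linarith
        rwa [div_lt_iff₀ (hspos mp)] at h3
      have e1 : (1 + η) * c₁ ≤ 1 := by
        have h4 : (0 : ℝ) ≤ (1 + η) * (c - c₁) :=
          mul_nonneg (by rw [hη]; linarith) (by linarith)
        rw [hη] at h4 ⊢
        nlinarith [mul_nonneg (sub_nonneg.mpr hclt.le) (show (0:ℝ) ≤ 2 - c by linarith)]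
      have e2 : (1 + η) * s mp ≤ s V := by
        have h5 : (1 + η) * s mp ≤ (1 + η) * (c₁ * s V) :=
          mul_le_mul_of_nonneg_left hgrad₁ (by rw [hη]; linarith)
        have h6 : ((1 + η) * c₁) * s V ≤ 1 * s V :=
          mul_le_mul_of_nonneg_right e1 (hspos V).le
        nlinarith
      have hTpt : T mp ω ≤ t := by linarith
      have hYle : Y t ω ≤ mp := by rw [hY]; exact Nat.sInf_le hTpt
      -- lower bound: mm < Y t ω
      have hTm : (1 - η) * s mm < T mm ω := by
        have h2 : -η < T mm ω / s mm - 1 := (abs_lt.mp hm).1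
        have h3 : 1 - η < T mm ω / s mm := by linarith
        rwa [lt_div_iff₀ (hspos mm)] at h3
      have e4 : c₂ * s mm ≤ (1 - η) * s mm :=
        mul_le_mul_of_nonneg_right (by rw [hη]; linarith) (hspos mm).le
      have e3 : t < (1 - η) * s mm := by linarith
      have hYgt : mm < Y t ω := by
        by_contra hle
        push_neg at hle
        have h7 : T mm ω ≤ T (Y t ω) ω := hAnti hle
        linarith
      -- conclude
      have hYr : (1 - ε / 2) * (V : ℝ) < (Y t ω : ℝ) := by
        have h8 : (mm : ℝ) < (Y t ω : ℝ) := by exact_mod_cast hYgt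
        linarith
      have hYr2 : (Y t ω : ℝ) ≤ (V : ℝ) * (1 + ε / 2) := by
        have h9 : (Y t ω : ℝ) ≤ (mp : ℝ) := by exact_mod_cast hYle
        linarith
      have habs : |((Y t ω : ℝ) / (V : ℝ)) - 1| < ε := by
        rw [abs_lt]
        constructor
        · have h10 : 1 - ε / 2 < (Y t ω : ℝ) / (V : ℝ) := by
            rw [lt_div_iff₀ hVr]; linarith
          linarith
        · have h11 : (Y t ω : ℝ) / (V : ℝ) ≤ 1 + ε / 2 := by
            rw [div_le_iff₀ hVr]; linarith
          linarith
      linarith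
    -- final measure estimate
    refine le_trans (measure_mono hsub) (le_trans (measure_union_le _ _) ?_)
    rw [hGzero, add_zero]
    refine le_trans (measure_union_le _ _) ?_
    calc P {ω | η ≤ |T mp ω / s mp - 1|} + P {ω | η ≤ |T mm ω / s mm - 1|}
        ≤ δ / 2 + δ / 2 := add_le_add (hM mp hmpM) (hM mm hmmM)
      _ = δ := ENNReal.add_halves δ
  -- Step 3: reduce general ε to ε ≤ 1/2.
  intro ε hε
  have hε' : 0 < min ε (1 / 2) := lt_min hε (by norm_num)
  have h := key (min ε (1 / 2)) hε' (min_le_right _ _)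
  refine tendsto_of_tendsto_of_tendsto_of_le_of_le
    (tendsto_const_nhds (x := (0 : ENNReal)) (f := nhdsWithin (0:ℝ) (Set.Ioi 0))) h
    (fun t => zero_le) fun t => ?_
  refine measure_mono fun ω hω => ?_
  simp only [Set.mem_setOf_eq] at hω ⊢
  exact le_trans (min_le_left _ _) hω
end

section
/- Let (s_n)_{n≥0} be positive reals strictly decreasing to 0 and define v(t) := inf{ n ≥ 0 : s_n ≤ t } for t > 0. Assume (i) s_{n+1}/s_n → 1 as n → ∞, and (ii) for every x > 1, limsup_{n→∞} s_{⌊nx⌋}/s_n < 1. Then lim_{a→1} limsup_{t→0⁺} | v(at)/v(t) − 1 | = 0. -/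
open Filter Set

/-- Regularity of the speed function: if `s_{n+1}/s_n → 1` and
`limsup_n s_{⌊nx⌋}/s_n < 1` for every `x > 1`, then
`lim_{a→1} limsup_{t→0⁺} |v(at)/v(t) − 1| = 0`, where `v(t) = inf{n : s_n ≤ t}`. -/
theorem stmt12 (s : ℕ → ℝ) (hspos : ∀ n, 0 < s n) (hsanti : StrictAnti s)
    (hs0 : Tendsto s atTop (nhds 0))
    (v : ℝ → ℕ) (hv : ∀ t, v t = sInf {n : ℕ | s n ≤ t})
    (hratio : Tendsto (fun n => s (n + 1) / s n) atTop (nhds 1))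
    (hgrad : ∀ x : ℝ, 1 < x →
      Filter.limsup (fun n : ℕ => s ⌊(n : ℝ) * x⌋₊ / s n) atTop < 1) :
    Tendsto (fun a : ℝ =>
        Filter.limsup (fun t : ℝ => |((v (a * t) : ℝ) / (v t : ℝ)) - 1|)
          (nhdsWithin 0 (Set.Ioi 0)))
      (nhds 1) (nhds 0) := by
  -- basic facts about v
  have hvmem : ∀ t : ℝ, 0 < t → s (v t) ≤ t := by
    intro t ht
    have hne : {n : ℕ | s n ≤ t}.Nonempty := by
      obtain ⟨n, hn⟩ := (hs0.eventually_lt_const ht).exists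
      exact ⟨n, hn.le⟩
    rw [hv]
    exact Nat.sInf_mem hne
  have hvlt : ∀ (t : ℝ) (n : ℕ), n < v t → t < s n := by
    intro t n hn
    rw [hv] at hn
    have := Nat.notMem_of_lt_sInf hn
    simpa [not_le] using this
  have hvanti : ∀ t₁ t₂ : ℝ, 0 < t₁ → t₁ ≤ t₂ → v t₂ ≤ v t₁ := by
    intro t₁ t₂ h1 h12
    rw [hv t₂]
    exact Nat.sInf_le (le_trans (hvmem t₁ h1) h12)
  have hvinf : ∀ (N : ℕ) (t : ℝ), 0 < t → t < s N → N < v t := by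
    intro N t ht hts
    have h := lt_of_le_of_lt (hvmem t ht) hts
    exact hsanti.lt_iff_gt.mp h
  -- key consequence of hgrad
  have hkey : ∀ ε : ℝ, 0 < ε → ∃ c : ℝ, 1/2 ≤ c ∧ c < 1 ∧
      ∃ N : ℕ, ∀ n ≥ N, s ⌊(n : ℝ) * (1 + ε)⌋₊ ≤ c * s n := by
    intro ε hε
    have hx : (1:ℝ) < 1 + ε := by linarith
    have hL := hgrad (1 + ε) hx
    set L := Filter.limsup (fun n : ℕ => s ⌊(n : ℝ) * (1+ε)⌋₊ / s n) atTop with hLdef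
    refine ⟨max ((L+1)/2) (1/2), le_max_right _ _, max_lt (by linarith) (by norm_num), ?_⟩
    have hbdd : IsBoundedUnder (· ≤ ·) atTop (fun n : ℕ => s ⌊(n : ℝ) * (1+ε)⌋₊ / s n) := by
      refine isBoundedUnder_of ⟨1, fun n => ?_⟩
      have hn0 : (0:ℝ) ≤ (n:ℝ) := Nat.cast_nonneg n
      have hn : n ≤ ⌊(n : ℝ) * (1+ε)⌋₊ := Nat.le_floor (by nlinarith)
      exact (div_le_one (hspos n)).2 (hsanti.antitone hn)
    have hlt : L < max ((L+1)/2) (1/2) := lt_of_lt_of_le (by linarith) (le_max_left _ _)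
    have hev := eventually_lt_of_limsup_lt hlt hbdd
    obtain ⟨N, hN⟩ := eventually_atTop.1 hev
    exact ⟨N, fun n hn => le_of_lt ((div_lt_iff₀ (hspos n)).1 (hN n hn))⟩
  -- main estimate
  have hmain : ∀ ε : ℝ, 0 < ε → ∃ δ : ℝ, 0 < δ ∧ ∀ a : ℝ, |a - 1| < δ →
      ∀ᶠ t in nhdsWithin (0:ℝ) (Set.Ioi 0), |((v (a*t) : ℝ) / (v t : ℝ)) - 1| ≤ ε := by
    intro ε hε
    obtain ⟨c, hc2, hc1, N, hN⟩ := hkey ε hε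
    have hc0 : (0:ℝ) < c := by linarith
    have hinv : (1:ℝ) < 1/c := one_lt_one_div hc0 hc1
    refine ⟨min (1 - c) (1/c - 1), lt_min (by linarith) (by linarith), ?_⟩
    intro a ha
    have h1 := abs_lt.1 ha
    have hac : c < a := by
      have := min_le_left (1-c) (1/c-1); linarith [h1.1]
    have hac' : a < 1/c := by
      have := min_le_right (1-c) (1/c-1); linarith [h1.2]
    have ha0 : (0:ℝ) < a := by linarith
    have hT : (0:ℝ) < c * s N := mul_pos hc0 (hspos N)
    filter_upwards [Ioo_mem_nhdsGT_of_mem (⟨le_refl (0:ℝ), hT⟩ : (0:ℝ) ∈ Set.Ico 0 (c * s N))]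
      with t ht
    obtain ⟨ht0, htT⟩ := ht
    have htsN : t < s N :=
      lt_of_lt_of_le htT (mul_le_of_le_one_left (hspos N).le hc1.le)
    have hNn : N < v t := hvinf N t ht0 htsN
    have hn1 : 0 < v t := lt_of_le_of_lt (Nat.zero_le N) hNn
    have hnR : (0:ℝ) < (v t : ℝ) := by exact_mod_cast hn1
    have hat0 : 0 < a * t := mul_pos ha0 ht0
    rcases le_or_gt a 1 with hA | hA
    · -- a ≤ 1 : ratio between 1 and 1+ε
      have hle : v t ≤ v (a*t) := hvanti (a*t) t hat0 (by nlinarith)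
      have hup : v (a*t) ≤ ⌊(v t : ℝ)*(1+ε)⌋₊ := by
        rw [hv]
        apply Nat.sInf_le
        have hh1 : s ⌊(v t : ℝ)*(1+ε)⌋₊ ≤ c * s (v t) := hN (v t) hNn.le
        have hh2 : c * s (v t) ≤ c * t := mul_le_mul_of_nonneg_left (hvmem t ht0) hc0.le
        have hh3 : c * t ≤ a * t := by nlinarith
        exact le_trans hh1 (le_trans hh2 hh3)
      have hupR : (v (a*t) : ℝ) ≤ (v t : ℝ) * (1+ε) := by
        calc (v (a*t) : ℝ) ≤ (⌊(v t : ℝ)*(1+ε)⌋₊ : ℝ) := by exact_mod_cast hup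
          _ ≤ (v t : ℝ)*(1+ε) := Nat.floor_le (by positivity)
      have hleR : (v t : ℝ) ≤ (v (a*t) : ℝ) := by exact_mod_cast hle
      rw [abs_le]
      constructor
      · have : (1:ℝ) ≤ (v (a*t):ℝ)/(v t:ℝ) := (one_le_div hnR).2 hleR
        linarith
      · have : (v (a*t):ℝ)/(v t:ℝ) ≤ 1+ε := (div_le_iff₀ hnR).2 (by linarith)
        linarith
    · -- 1 < a : ratio between 1-ε and 1
      have hmn : v (a*t) ≤ v t := hvanti t (a*t) ht0 (by nlinarith)
      have hNm : N < v (a*t) := by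
        have hh1 : a * t ≤ (1/c) * t := by nlinarith
        have hh2 : (1/c) * t < s N := by
          rw [div_mul_eq_mul_div, one_mul, div_lt_iff₀ hc0]
          nlinarith
        have hh3 : 0 < (1/c) * t := by positivity
        exact lt_of_lt_of_le (hvinf N ((1/c)*t) hh3 hh2) (hvanti (a*t) ((1/c)*t) hat0 hh1)
      have hfloor : v t ≤ ⌊(v (a*t) : ℝ)*(1+ε)⌋₊ := by
        by_contra hcon
        push_neg at hcon
        have hh1 : t < s ⌊(v (a*t) : ℝ)*(1+ε)⌋₊ := hvlt t _ hcon
        have hh2 : s ⌊(v (a*t) : ℝ)*(1+ε)⌋₊ ≤ c * s (v (a*t)) := hN _ hNm.le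
        have hh3 : s (v (a*t)) ≤ a * t := hvmem _ hat0
        have hca : c * a < 1 := by
          have h := mul_lt_mul_of_pos_left hac' hc0
          have hcc : c * (1/c) = 1 := by field_simp
          linarith
        have h4 : c * s (v (a*t)) ≤ c * (a*t) := mul_le_mul_of_nonneg_left hh3 hc0.le
        have h5 : c * (a * t) < t := by
          rw [← mul_assoc]; exact mul_lt_of_lt_one_left ht0 hca
        linarith
      have hnR' : (v t : ℝ) ≤ (v (a*t) : ℝ)*(1+ε) := by
        calc (v t : ℝ) ≤ (⌊(v (a*t) : ℝ)*(1+ε)⌋₊ : ℝ) := by exact_mod_cast hfloor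
          _ ≤ (v (a*t) : ℝ)*(1+ε) := Nat.floor_le (by positivity)
      have hmnR : (v (a*t) : ℝ) ≤ (v t : ℝ) := by exact_mod_cast hmn
      rw [abs_le]
      constructor
      · have h2 : (1:ℝ) - ε ≤ (v (a*t):ℝ)/(v t:ℝ) := by
          rw [le_div_iff₀ hnR]
          nlinarith [mul_nonneg hε.le (sub_nonneg.2 hmnR)]
        linarith
      · have : (v (a*t):ℝ)/(v t:ℝ) ≤ 1 := (div_le_one hnR).2 hmnR
        linarith
  -- conclusion
  rw [Metric.tendsto_nhds]
  intro ε hε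
  obtain ⟨δ, hδ, hδ'⟩ := hmain (ε/2) (by linarith)
  have hball : ∀ᶠ a in nhds (1:ℝ), |a - 1| < δ := by
    filter_upwards [Metric.ball_mem_nhds (1:ℝ) hδ] with a ha
    simpa [Real.dist_eq] using ha
  filter_upwards [hball] with a ha
  have hev := hδ' a ha
  have hcob : IsCoboundedUnder (· ≤ ·) (nhdsWithin (0:ℝ) (Set.Ioi 0))
      (fun t : ℝ => |((v (a*t):ℝ)/(v t:ℝ)) - 1|) :=
    isCoboundedUnder_le_of_le _ fun t => abs_nonneg _
  have hbd : IsBoundedUnder (· ≤ ·) (nhdsWithin (0:ℝ) (Set.Ioi 0))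
      (fun t : ℝ => |((v (a*t):ℝ)/(v t:ℝ)) - 1|) := ⟨ε/2, hev⟩
  have h1 : Filter.limsup (fun t : ℝ => |((v (a*t):ℝ)/(v t:ℝ)) - 1|)
      (nhdsWithin (0:ℝ) (Set.Ioi 0)) ≤ ε/2 := limsup_le_of_le hcob hev
  have h2 : (0:ℝ) ≤ Filter.limsup (fun t : ℝ => |((v (a*t):ℝ)/(v t:ℝ)) - 1|)
      (nhdsWithin (0:ℝ) (Set.Ioi 0)) :=
    le_limsup_of_frequently_le (Frequently.of_forall fun t => abs_nonneg _) hbd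
  rw [Real.dist_eq]
  rw [abs_of_nonneg (by linarith)]
  linarith
end

section
/- Let (T_n)_{n≥0} be random variables on a probability space that are almost surely nonincreasing in n and converge to 0 almost surely, and let (s_n)_{n≥0} be positive reals strictly decreasing to 0. Define Y(t) := inf{ n ≥ 0 : T_n ≤ t } and v(t) := inf{ n ≥ 0 : s_n ≤ t } for t > 0. Assume (i) s_{n+1}/s_n → 1 as n → ∞; (ii) for every x > 1, limsup_{n→∞} s_{⌊nx⌋}/s_n < 1; and (iii) T_n/s_n → 1 almost surely as n → ∞. Then Y(t)/v(t) → 1 almost surely as t → 0⁺. -/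
/-!
Write `Y = hitIndex T` and `v = hitIndex s`. Fix `x > 1`; hypothesis (ii) gives `c < 1` with
`s_{⌊nx⌋} ≤ c s_n` for large `n`, hence `v(c t) ≤ x v(t)` for small `t`. Since
`T_n / s_n → 1`, eventually `c s_n ≤ T_n ≤ c⁻¹ s_n`, and comparing first passage indices
gives `v(c⁻¹ t) ≤ Y(t) ≤ v(c t)`. Together, `v(t) / x ≤ Y(t) ≤ x v(t)` for small `t`.
-/

open Filter MeasureTheory Topology

/-- `0` when `f` never drops to `t` or below, since `sInf ∅ = 0`. -/
noncomputable def hitIndex (f : ℕ → ℝ) (t : ℝ) : ℕ := sInf {n : ℕ | f n ≤ t}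

section hitIndex

variable {f g : ℕ → ℝ} {t : ℝ}

theorem hitIndex_le {k : ℕ} (hk : f k ≤ t) : hitIndex f t ≤ k := Nat.sInf_le hk

theorem apply_hitIndex_le (hf0 : Tendsto f atTop (𝓝 0)) (ht : 0 < t) :
    f (hitIndex f t) ≤ t := by
  obtain ⟨n, hn⟩ := (hf0.eventually (gt_mem_nhds ht)).exists
  exact Nat.sInf_mem (s := {n : ℕ | f n ≤ t}) ⟨n, hn.le⟩

theorem tendsto_hitIndex_nhdsGT_zero (hf : Antitone f) (hfpos : ∀ n, 0 < f n)
    (hf0 : Tendsto f atTop (𝓝 0)) : Tendsto (hitIndex f) (𝓝[>] 0) atTop := by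
  refine tendsto_atTop.2 fun M => ?_
  filter_upwards [Ioo_mem_nhdsGT (hfpos M)] with t ⟨ht0, htM⟩
  by_contra! hlt
  exact (hf hlt.le |>.trans (apply_hitIndex_le hf0 ht0)).not_gt htM

theorem eventually_hitIndex_mul_le {a : ℝ} (hg : Antitone g) (hgpos : ∀ n, 0 < g n)
    (hg0 : Tendsto g atTop (𝓝 0)) (ha : 0 ≤ a) (hfg : ∀ᶠ n in atTop, f n ≤ a * g n) :
    ∀ᶠ t in 𝓝[>] 0, hitIndex f (a * t) ≤ hitIndex g t := by
  obtain ⟨N, hN⟩ := eventually_atTop.1 hfg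
  filter_upwards [(tendsto_hitIndex_nhdsGT_zero hg hgpos hg0).eventually_ge_atTop N,
    self_mem_nhdsWithin] with t htN ht
  refine hitIndex_le ?_
  calc f (hitIndex g t) ≤ a * g (hitIndex g t) := hN _ htN
    _ ≤ a * t := mul_le_mul_of_nonneg_left (apply_hitIndex_le hg0 ht) ha

theorem exists_eventually_hitIndex_mul_le {s : ℕ → ℝ} {x : ℝ} (hs : Antitone s)
    (hspos : ∀ n, 0 < s n) (hs0 : Tendsto s atTop (𝓝 0)) (hx : 1 ≤ x)
    (hgrad : limsup (fun n : ℕ => s ⌊(n : ℝ) * x⌋₊ / s n) atTop < 1) :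
    ∃ c, 0 < c ∧ c < 1 ∧
      ∀ᶠ t in 𝓝[>] 0, (hitIndex s (c * t) : ℝ) ≤ x * hitIndex s t := by
  obtain ⟨c, hc, hc1⟩ := exists_between (max_lt hgrad (by norm_num : (1 / 2 : ℝ) < 1))
  have hbdd : IsBoundedUnder (· ≤ ·) atTop (fun n : ℕ => s ⌊(n : ℝ) * x⌋₊ / s n) :=
    isBoundedUnder_of ⟨1, fun n => div_le_one_of_le₀
      (hs (Nat.le_floor (le_mul_of_one_le_right n.cast_nonneg hx))) (hspos n).le⟩
  obtain ⟨N, hN⟩ := eventually_atTop.1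
    (eventually_lt_of_limsup_lt ((le_max_left _ _).trans_lt hc) hbdd)
  have hc0 : 0 < c := (by norm_num : (0 : ℝ) < 1 / 2).trans_le (le_max_right _ _) |>.trans hc
  refine ⟨c, hc0, hc1, ?_⟩
  filter_upwards [(tendsto_hitIndex_nhdsGT_zero hs hspos hs0).eventually_ge_atTop N,
    self_mem_nhdsWithin] with t htN ht
  set n := hitIndex s t
  have hstep : s ⌊(n : ℝ) * x⌋₊ ≤ c * t :=
    calc s ⌊(n : ℝ) * x⌋₊ ≤ c * s n := ((div_lt_iff₀ (hspos n)).1 (hN n htN)).le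
      _ ≤ c * t := mul_le_mul_of_nonneg_left (apply_hitIndex_le hs0 ht) hc0.le
  calc (hitIndex s (c * t) : ℝ) ≤ ⌊(n : ℝ) * x⌋₊ := Nat.cast_le.2 (hitIndex_le hstep)
    _ ≤ n * x := Nat.floor_le (by positivity)
    _ = x * n := mul_comm _ _

end hitIndex

theorem tendsto_div_nhds_one_of_forall_le_mul {α : Type*} {l : Filter α} {u w : α → ℝ}
    (hw : ∀ᶠ a in l, 0 < w a)
    (h : ∀ x > 1, ∀ᶠ a in l, u a ≤ x * w a ∧ w a ≤ x * u a) :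
    Tendsto (fun a => u a / w a) l (𝓝 1) := by
  refine tendsto_order.2 ⟨fun b hb => ?_, fun b hb => ?_⟩
  · obtain ⟨y, hy, hy1⟩ := exists_between (max_lt hb zero_lt_one)
    have hy0 : 0 < y := (le_max_right _ _).trans_lt hy
    filter_upwards [hw, h y⁻¹ ((one_lt_inv₀ hy0).2 hy1)] with a hwa hbounds
    rw [lt_div_iff₀ hwa]
    calc b * w a < y * w a := by gcongr; exact (le_max_left _ _).trans_lt hy
      _ ≤ u a := (le_inv_mul_iff₀ hy0).1 hbounds.2
  · obtain ⟨y, hy1, hy⟩ := exists_between hb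
    filter_upwards [hw, h y hy1] with a hwa hbounds
    rw [div_lt_iff₀ hwa]
    calc u a ≤ y * w a := hbounds.1
      _ < b * w a := by gcongr

theorem tendsto_hitIndex_div_hitIndex {f s : ℕ → ℝ} (hf : Antitone f) (hs : Antitone s)
    (hspos : ∀ n, 0 < s n) (hs0 : Tendsto s atTop (𝓝 0))
    (hgrad : ∀ x : ℝ, 1 < x →
      limsup (fun n : ℕ => s ⌊(n : ℝ) * x⌋₊ / s n) atTop < 1)
    (hfs : Tendsto (fun n => f n / s n) atTop (𝓝 1)) :
    Tendsto (fun t => (hitIndex f t : ℝ) / hitIndex s t) (𝓝[>] 0) (𝓝 1) := by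
  have hfpos : ∀ n, 0 < f n := by
    obtain ⟨N, hN⟩ := eventually_atTop.1 (hfs.eventually (lt_mem_nhds one_pos))
    intro n
    have hfN : 0 < f (max n N) :=
      (div_pos_iff_of_pos_right (hspos _)).1 (hN _ (le_max_right _ _))
    exact hfN.trans_le (hf (le_max_left _ _))
  have hf0 : Tendsto f atTop (𝓝 0) := by
    simpa using (hfs.mul hs0).congr fun n => div_mul_cancel₀ (f n) (hspos n).ne'
  refine tendsto_div_nhds_one_of_forall_le_mul ?_ fun x hx => ?_
  · filter_upwards [(tendsto_hitIndex_nhdsGT_zero hs hspos hs0).eventually_gt_atTop 0]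
      with t ht using Nat.cast_pos.2 ht
  obtain ⟨c, hc0, hc1, hs_scale⟩ :=
    exists_eventually_hitIndex_mul_le hs hspos hs0 hx.le (hgrad x hx)
  have hfs_upper : ∀ᶠ n in atTop, f n ≤ c⁻¹ * s n := by
    filter_upwards [hfs.eventually (gt_mem_nhds ((one_lt_inv₀ hc0).2 hc1))] with n hn
      using (div_le_iff₀ (hspos n)).1 hn.le
  have hfs_lower : ∀ᶠ n in atTop, s n ≤ c⁻¹ * f n := by
    filter_upwards [hfs.eventually (lt_mem_nhds hc1)] with n hn
      using (le_inv_mul_iff₀ hc0).2 ((le_div_iff₀ (hspos n)).1 hn.le)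
  have hf_le_s := eventually_nhdsGT_zero_mul_left hc0
    (eventually_hitIndex_mul_le hs hspos hs0 (inv_nonneg.2 hc0.le) hfs_upper)
  have hs_le_f := eventually_hitIndex_mul_le hf hfpos hf0 (inv_nonneg.2 hc0.le) hfs_lower
  filter_upwards [hf_le_s, hs_scale,
    eventually_nhdsGT_zero_mul_left (inv_pos.2 hc0) hs_scale, hs_le_f]
    with t hf_le_s hs_c hs_c_inv hs_le_f
  rw [inv_mul_cancel_left₀ hc0.ne'] at hf_le_s
  rw [mul_inv_cancel_left₀ hc0.ne'] at hs_c_inv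
  exact ⟨(Nat.cast_le.2 hf_le_s).trans hs_c,
    hs_c_inv.trans (mul_le_mul_of_nonneg_left (Nat.cast_le.2 hs_le_f) (by linarith))⟩

theorem stmt13_general {Ω : Type*} [MeasurableSpace Ω] (P : Measure Ω)
    (T : ℕ → Ω → ℝ)
    (hmono : ∀ᵐ ω ∂P, ∀ n, T (n + 1) ω ≤ T n ω)
    (s : ℕ → ℝ) (hspos : ∀ n, 0 < s n) (hsanti : StrictAnti s)
    (hs0 : Tendsto s atTop (nhds 0))
    (Y : ℝ → Ω → ℕ) (hY : ∀ t ω, Y t ω = sInf {n : ℕ | T n ω ≤ t})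
    (v : ℝ → ℕ) (hv : ∀ t, v t = sInf {n : ℕ | s n ≤ t})
    (hgrad : ∀ x : ℝ, 1 < x →
      Filter.limsup (fun n : ℕ => s ⌊(n : ℝ) * x⌋₊ / s n) atTop < 1)
    (has : ∀ᵐ ω ∂P, Tendsto (fun n => T n ω / s n) atTop (nhds 1)) :
    ∀ᵐ ω ∂P, Tendsto (fun t => (Y t ω : ℝ) / (v t : ℝ))
      (nhdsWithin 0 (Set.Ioi 0)) (nhds 1) := by
  filter_upwards [hmono, has] with ω hmono_ω has_ω
  have hYv : (fun t => (Y t ω : ℝ) / v t) =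
      fun t => (hitIndex (T · ω) t : ℝ) / hitIndex s t := by
    funext t
    rw [hY, hv]
    rfl
  rw [hYv]
  exact tendsto_hitIndex_div_hitIndex (antitone_nat_of_succ_le hmono_ω) hsanti.antitone hspos
    hs0 hgrad has_ω

/-- Almost-sure inversion: if `s_{n+1}/s_n → 1`, `limsup_n s_{⌊nx⌋}/s_n < 1` for every
`x > 1`, and `T_n/s_n → 1` almost surely, then `Y(t)/v(t) → 1` almost surely as `t → 0⁺`,
where `Y(t) = inf{n : T_n ≤ t}` and `v(t) = inf{n : s_n ≤ t}`. -/
theorem stmt13 {Ω : Type*} [MeasurableSpace Ω] (P : Measure Ω) [IsProbabilityMeasure P]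
    (T : ℕ → Ω → ℝ)
    (hmono : ∀ᵐ ω ∂P, ∀ n, T (n + 1) ω ≤ T n ω)
    (hlim : ∀ᵐ ω ∂P, Tendsto (fun n => T n ω) atTop (nhds 0))
    (s : ℕ → ℝ) (hspos : ∀ n, 0 < s n) (hsanti : StrictAnti s)
    (hs0 : Tendsto s atTop (nhds 0))
    (Y : ℝ → Ω → ℕ) (hY : ∀ t ω, Y t ω = sInf {n : ℕ | T n ω ≤ t})
    (v : ℝ → ℕ) (hv : ∀ t, v t = sInf {n : ℕ | s n ≤ t})
    (hratio : Tendsto (fun n => s (n + 1) / s n) atTop (nhds 1))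
    (hgrad : ∀ x : ℝ, 1 < x →
      Filter.limsup (fun n : ℕ => s ⌊(n : ℝ) * x⌋₊ / s n) atTop < 1)
    (has : ∀ᵐ ω ∂P, Tendsto (fun n => T n ω / s n) atTop (nhds 1)) :
    ∀ᵐ ω ∂P, Tendsto (fun t => (Y t ω : ℝ) / (v t : ℝ))
      (nhdsWithin 0 (Set.Ioi 0)) (nhds 1) :=
  stmt13_general P T hmono s hspos hsanti hs0 Y hY v hv hgrad has
end

section
/- Let g : (0,∞) → (0,∞) be measurable and regularly varying at +∞ with index ρ' < −1, i.e. for every a > 0, g(ax)/g(x) → a^{ρ'} as x → ∞. Then the series Σ_{k≥1} g(k) converges, the tail sums R(n) := Σ_{k≥n} g(k) satisfy R(n) ~ −n·g(n)/(ρ'+1) as n → ∞, and R varies regularly with index ρ'+1, i.e. for every a > 0, R(⌊an⌋)/R(n) → a^{ρ'+1} as n → ∞. -/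
open Filter Real Set MeasureTheory
open scoped ENNReal

/-- Uniform convergence theorem for additively slowly varying measurable functions. -/
lemma stmt14_uct (k : ℝ → ℝ) (hk : Measurable k)
    (hlim : ∀ s : ℝ, Tendsto (fun t => k (t + s) - k t) atTop (nhds 0)) :
    ∀ ε > 0, ∀ᶠ t in (atTop : Filter ℝ), ∀ u ∈ Icc (0:ℝ) 1, |k (t + u) - k t| ≤ ε := by
  intro ε hε
  by_contra hcon
  rw [Filter.not_eventually] at hcon
  have hsel : ∀ n : ℕ, ∃ t : ℝ, (n:ℝ) ≤ t ∧ ∃ u, u ∈ Icc (0:ℝ) 1 ∧ ε < |k (t + u) - k t| := by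
    intro n
    rcases frequently_atTop.1 hcon (n:ℝ) with ⟨t, ht, hbad⟩
    push_neg at hbad
    obtain ⟨u, hu, h⟩ := hbad
    exact ⟨t, ht, u, hu, h⟩
  choose x hx u hu hbad using hsel
  have hxtop : Tendsto x atTop atTop :=
    tendsto_atTop_mono hx tendsto_natCast_atTop_atTop
  have hytop : Tendsto (fun j => x j + u j) atTop atTop :=
    tendsto_atTop_mono (fun j => le_add_of_nonneg_right (hu j).1) hxtop
  -- the two families of good sets
  set S : ℝ → Set ℝ := fun c => {t : ℝ | |k (c + t) - k c| ≤ ε/2} with hS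
  have hSmeas : ∀ c, MeasurableSet (S c) := by
    intro c
    have : Measurable fun t => |k (c + t) - k c| :=
      ((hk.comp (measurable_const_add c)).sub measurable_const).abs
    exact this measurableSet_Iic
  set E : ℕ → Set ℝ := fun m => (⋂ (j : ℕ) (_ : m ≤ j), S (x j)) ∩ Icc (0:ℝ) 2 with hE
  set F : ℕ → Set ℝ := fun m => (⋂ (j : ℕ) (_ : m ≤ j), S (x j + u j)) ∩ Icc (0:ℝ) 2 with hF
  have hEmeas : ∀ m, MeasurableSet (E m) := fun m =>
    (MeasurableSet.iInter fun j => MeasurableSet.iInter fun _ => hSmeas _).inter measurableSet_Icc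
  have hFmeas : ∀ m, MeasurableSet (F m) := fun m =>
    (MeasurableSet.iInter fun j => MeasurableSet.iInter fun _ => hSmeas _).inter measurableSet_Icc
  have hEmono : Monotone E := by
    intro m m' hmm
    refine inter_subset_inter ?_ le_rfl
    intro t ht
    simp only [mem_iInter, mem_setOf_eq] at ht ⊢
    exact fun j hj => ht j (le_trans hmm hj)
  have hFmono : Monotone F := by
    intro m m' hmm
    refine inter_subset_inter ?_ le_rfl
    intro t ht
    simp only [mem_iInter, mem_setOf_eq] at ht ⊢
    exact fun j hj => ht j (le_trans hmm hj)
  -- the unions cover Icc 0 2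
  have hcover : ∀ (y : ℕ → ℝ), Tendsto y atTop atTop → ∀ t : ℝ, ∃ m : ℕ, ∀ j, m ≤ j →
      t ∈ S (y j) := by
    intro y hy t
    have h1 : Tendsto (fun j => k (y j + t) - k (y j)) atTop (nhds 0) := (hlim t).comp hy
    have h2 : ∀ᶠ j in atTop, |k (y j + t) - k (y j)| < ε/2 := by
      have := h1.abs
      rw [abs_zero] at this
      exact this.eventually_lt_const (by linarith)
    rcases eventually_atTop.1 h2 with ⟨m, hm⟩
    exact ⟨m, fun j hj => le_of_lt (hm j hj)⟩
  have hEU : ⋃ m, E m = Icc (0:ℝ) 2 := by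
    apply Subset.antisymm
    · exact iUnion_subset fun m => inter_subset_right
    · intro t ht
      rcases hcover x hxtop t with ⟨m, hm⟩
      exact mem_iUnion.2 ⟨m, ⟨by simp only [mem_iInter]; exact fun j hj => hm j hj, ht⟩⟩
  have hFU : ⋃ m, F m = Icc (0:ℝ) 2 := by
    apply Subset.antisymm
    · exact iUnion_subset fun m => inter_subset_right
    · intro t ht
      rcases hcover (fun j => x j + u j) hytop t with ⟨m, hm⟩
      exact mem_iUnion.2 ⟨m, ⟨by simp only [mem_iInter]; exact fun j hj => hm j hj, ht⟩⟩
  -- measures converge to 2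
  have hIcc2 : (volume : Measure ℝ) (Icc (0:ℝ) 2) = 2 := by
    rw [Real.volume_Icc]; norm_num
  have hEtend : Tendsto (fun m => volume (E m)) atTop (nhds 2) := by
    have := tendsto_measure_iUnion_atTop (μ := volume) hEmono
    rwa [hEU, hIcc2] at this
  have hFtend : Tendsto (fun m => volume (F m)) atTop (nhds 2) := by
    have := tendsto_measure_iUnion_atTop (μ := volume) hFmono
    rwa [hFU, hIcc2] at this
  have h32 : (3/2 : ℝ≥0∞) < 2 := by
    rw [ENNReal.div_lt_iff (by norm_num) (by norm_num)]; norm_num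
  obtain ⟨m₁, hm₁⟩ := (hEtend.eventually_const_lt h32).exists
  obtain ⟨m₂, hm₂⟩ := (hFtend.eventually_const_lt h32).exists
  set m := max m₁ m₂ with hm
  have hEm : 3/2 < volume (E m) := lt_of_lt_of_le hm₁ (measure_mono (hEmono (le_max_left _ _)))
  have hFm : 3/2 < volume (F m) := lt_of_lt_of_le hm₂ (measure_mono (hFmono (le_max_right _ _)))
  -- translate F m by u m
  set B : Set ℝ := (fun t => -(u m) + t) ⁻¹' (F m) with hB
  have hBmeas : MeasurableSet B := (hFmeas m).preimage (measurable_const_add _)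
  have hBvol : volume B = volume (F m) := measure_preimage_add volume _ _
  have hsub : E m ∪ B ⊆ Icc (0:ℝ) 3 := by
    rintro t (ht | ht)
    · exact Icc_subset_Icc le_rfl (by norm_num) ht.2
    · have h2 := ht.2
      have hu1 := hu m
      simp only [mem_Icc] at h2 hu1 ⊢
      constructor <;> nlinarith [h2.1, h2.2, hu1.1, hu1.2]
  have hne : (E m ∩ B).Nonempty := by
    by_contra hemp
    rw [not_nonempty_iff_eq_empty] at hemp
    have hdisj : Disjoint (E m) B := disjoint_iff_inter_eq_empty.2 hemp
    have h1 : volume (E m ∪ B) = volume (E m) + volume B := measure_union hdisj hBmeas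
    have h2 : volume (E m ∪ B) ≤ volume (Icc (0:ℝ) 3) := measure_mono hsub
    rw [Real.volume_Icc] at h2
    have h33 : (3:ℝ≥0∞) = 3/2 + 3/2 := by
      rw [ENNReal.div_add_div_same, ENNReal.eq_div_iff (by norm_num) (by norm_num)]; norm_num
    have h3 : (3:ℝ≥0∞) < volume (E m) + volume B := by
      rw [hBvol, h33]
      exact ENNReal.add_lt_add hEm hFm
    rw [h1] at h2
    have : ENNReal.ofReal (3 - 0) = (3:ℝ≥0∞) := by norm_num
    rw [this] at h2
    exact absurd (lt_of_lt_of_le h3 h2) (lt_irrefl _)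
  obtain ⟨t, htE, htB⟩ := hne
  have h1 : |k (x m + t) - k (x m)| ≤ ε/2 := by
    have := htE.1
    simp only [mem_iInter, hS, mem_setOf_eq] at this
    exact this m le_rfl
  have h2 : |k (x m + u m + (-(u m) + t)) - k (x m + u m)| ≤ ε/2 := by
    have := htB
    simp only [hB, mem_preimage, hF, mem_inter_iff, mem_iInter, hS, mem_setOf_eq] at this
    exact this.1 m le_rfl
  have harg : x m + u m + (-(u m) + t) = x m + t := by ring
  rw [harg] at h2
  have := hbad m
  have htri : |k (x m + u m) - k (x m)| ≤
      |k (x m + u m) - k (x m + t)| + |k (x m + t) - k (x m)| := abs_sub_le _ _ _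
  rw [abs_sub_comm (k (x m + u m)) (k (x m + t))] at htri
  linarith

/-- Chaining the UCT: control of `k (t+u) - k t` for all `u ≥ 0`. -/
lemma stmt14_chain (k : ℝ → ℝ) (hk : Measurable k)
    (hlim : ∀ s : ℝ, Tendsto (fun t => k (t + s) - k t) atTop (nhds 0)) :
    ∀ ε > 0, ∃ T : ℝ, ∀ t ≥ T, ∀ u ≥ 0, |k (t + u) - k t| ≤ (u + 1) * ε := by
  intro ε hε
  obtain ⟨T, hT⟩ := eventually_atTop.1 (stmt14_uct k hk hlim ε hε)
  refine ⟨T, fun t ht u hu => ?_⟩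
  have key : ∀ m : ℕ, ∀ t ≥ T, ∀ u, 0 ≤ u → u ≤ (m:ℝ) + 1 → |k (t + u) - k t| ≤ ((m:ℝ) + 1) * ε := by
    intro m
    induction m with
    | zero =>
      intro t ht u hu0 hu1
      have h1 : u ≤ 1 := by simpa using hu1
      have := hT t ht u ⟨hu0, h1⟩
      simpa using this
    | succ m ih =>
      intro t ht u hu0 hu1
      by_cases hcase : u ≤ (m:ℝ) + 1
      · have := ih t ht u hu0 hcase
        have hε' : ((m:ℝ)+1) * ε ≤ ((m:ℝ)+1+1) * ε := by nlinarith
        push_cast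
        linarith
      · push_neg at hcase
        have h1 : |k (t + 1) - k t| ≤ ε := by
          simpa using hT t ht 1 ⟨by norm_num, le_rfl⟩
        have h2 : |k ((t+1) + (u-1)) - k (t+1)| ≤ ((m:ℝ)+1) * ε := by
          apply ih (t+1) (by linarith) (u-1) (by linarith)
          push_cast at hu1; linarith
        have harg : (t+1) + (u-1) = t + u := by ring
        rw [harg] at h2
        have htri : |k (t+u) - k t| ≤ |k (t+u) - k (t+1)| + |k (t+1) - k t| := abs_sub_le _ _ _
        push_cast
        linarith
  have hfloor : u ≤ (⌊u⌋₊ : ℝ) + 1 := le_of_lt (Nat.lt_floor_add_one u)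
  have h := key ⌊u⌋₊ t ht u hu hfloor
  have hle : ((⌊u⌋₊:ℝ) + 1) * ε ≤ (u + 1) * ε := by
    have := Nat.floor_le hu
    nlinarith
  linarith

/-- If `t n → ∞` and `s n → s₀` then `k (t n + s n) - k (t n) → 0`. -/
lemma stmt14_seq (k : ℝ → ℝ) (hk : Measurable k)
    (hlim : ∀ s : ℝ, Tendsto (fun t => k (t + s) - k t) atTop (nhds 0))
    (t s : ℕ → ℝ) (s₀ : ℝ) (ht : Tendsto t atTop atTop) (hs : Tendsto s atTop (nhds s₀)) :
    Tendsto (fun n => k (t n + s n) - k (t n)) atTop (nhds 0) := by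
  rw [Metric.tendsto_atTop]
  intro ε hε
  set M : ℕ := ⌊|s₀|⌋₊ + 1 with hMdef
  have hM : |s₀| < M := by
    push_cast
    exact (Nat.lt_floor_add_one (|s₀|)).trans_le (by simp [hMdef])
  set ε' : ℝ := ε / (3 * (M:ℝ) + 4) with hε'def
  have hMpos : (0:ℝ) < 3 * (M:ℝ) + 4 := by positivity
  have hε' : 0 < ε' := div_pos hε hMpos
  obtain ⟨T, hT⟩ := stmt14_chain k hk hlim ε' hε'
  have ev1 : ∀ᶠ n in atTop, |s n| < M := by
    have : Tendsto (fun n => |s n|) atTop (nhds |s₀|) := hs.abs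
    exact this.eventually_lt_const hM
  have ev2 : ∀ᶠ n in atTop, T + M ≤ t n := ht.eventually_ge_atTop _
  rcases eventually_atTop.1 (ev1.and ev2) with ⟨N, hN⟩
  refine ⟨N, fun n hn => ?_⟩
  obtain ⟨hsn, htn⟩ := hN n hn
  have hb : T ≤ t n - M := by linarith
  have h1 : |k ((t n - M) + (M + s n)) - k (t n - M)| ≤ ((M + s n) + 1) * ε' := by
    apply hT (t n - M) hb (M + s n) (by cases abs_lt.1 hsn; linarith)
  have h2 : |k ((t n - M) + (M:ℝ)) - k (t n - M)| ≤ ((M:ℝ) + 1) * ε' := by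
    apply hT (t n - M) hb (M:ℝ) (by positivity)
  have e1 : (t n - M) + (M + s n) = t n + s n := by ring
  have e2 : (t n - M) + (M:ℝ) = t n := by ring
  rw [e1] at h1
  rw [e2] at h2
  have habs := abs_lt.1 hsn
  have htri : |k (t n + s n) - k (t n)| ≤
      |k (t n + s n) - k (t n - M)| + |k (t n) - k (t n - M)| := by
    have := abs_sub_le (k (t n + s n)) (k (t n - M)) (k (t n))
    rw [abs_sub_comm (k (t n - M)) (k (t n))] at this
    linarith
  have hbound : |k (t n + s n) - k (t n)| ≤ (3 * (M:ℝ) + 3) * ε' := by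
    have b1 : ((M + s n) + 1) * ε' ≤ (2 * M + 2) * ε' := by nlinarith
    have b2 : ((M:ℝ) + 1) * ε' ≤ (M + 1) * ε' := le_rfl
    nlinarith
  have hfin : (3 * (M:ℝ) + 3) * ε' < ε := by
    rw [hε'def]
    have heq : (3*(M:ℝ)+3) * (ε/(3*(M:ℝ)+4)) = ε * ((3*(M:ℝ)+3)/(3*(M:ℝ)+4)) := by ring
    rw [heq]
    have hq : (3*(M:ℝ)+3)/(3*(M:ℝ)+4) < 1 := (div_lt_one hMpos).2 (by linarith)
    calc ε * ((3*(M:ℝ)+3)/(3*(M:ℝ)+4)) < ε * 1 := by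
          exact mul_lt_mul_of_pos_left hq hε
      _ = ε := mul_one ε
  rw [Real.dist_eq, sub_zero]
  linarith

lemma stmt14_klim (g : ℝ → ℝ) (hgpos : ∀ x > 0, 0 < g x) (ρ' : ℝ)
    (hreg : ∀ a > 0, Tendsto (fun x => g (a * x) / g x) atTop (nhds (a ^ ρ'))) :
    ∀ s : ℝ, Tendsto (fun t => (log (g (exp (t + s))) - ρ' * (t + s)) - (log (g (exp t)) - ρ' * t))
      atTop (nhds 0) := by
  intro s
  have ha : (0:ℝ) < exp s := exp_pos s
  have h1 : Tendsto (fun t : ℝ => g (exp s * exp t) / g (exp t)) atTop (nhds (exp s ^ ρ')) :=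
    (hreg (exp s) ha).comp tendsto_exp_atTop
  have h2 : Tendsto (fun t : ℝ => log (g (exp s * exp t) / g (exp t))) atTop (nhds (ρ' * s)) := by
    have hpos : (0:ℝ) < exp s ^ ρ' := rpow_pos_of_pos ha ρ'
    have := (Real.continuousAt_log (ne_of_gt hpos)).tendsto.comp h1
    rwa [Real.log_rpow ha, Real.log_exp] at this
  have h3 := h2.sub_const (ρ' * s)
  rw [sub_self] at h3
  apply h3.congr
  intro t
  have hg1 : 0 < g (exp t) := hgpos _ (exp_pos t)
  have hg2 : 0 < g (exp s * exp t) := hgpos _ (by positivity)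
  rw [Real.log_div (ne_of_gt hg2) (ne_of_gt hg1)]
  rw [show exp s * exp t = exp (t + s) by rw [← exp_add]; ring_nf]
  ring

lemma stmt14_kmeas (g : ℝ → ℝ) (hmeas : Measurable g) (ρ' : ℝ) :
    Measurable (fun t : ℝ => log (g (exp t)) - ρ' * t) :=
  ((Real.measurable_log.comp (hmeas.comp Real.measurable_exp)).sub
    (measurable_const.mul measurable_id))

/-- Potter-type bounds. -/
lemma stmt14_potter (g : ℝ → ℝ) (hmeas : Measurable g) (hgpos : ∀ x > 0, 0 < g x) (ρ' : ℝ)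
    (hreg : ∀ a > 0, Tendsto (fun x => g (a * x) / g x) atTop (nhds (a ^ ρ'))) :
    ∀ ε > 0, ∃ N₀ : ℕ, 1 ≤ N₀ ∧ ∀ n : ℕ, N₀ ≤ n → ∀ m : ℝ, (n:ℝ) ≤ m →
      g m ≤ exp ε * (m / n) ^ (ρ' + ε) * g n ∧ exp (-ε) * (m / n) ^ (ρ' - ε) * g n ≤ g m := by
  intro ε hε
  set k : ℝ → ℝ := fun t => log (g (exp t)) - ρ' * t with hkdef
  obtain ⟨T, hT⟩ := stmt14_chain k (stmt14_kmeas g hmeas ρ')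
    (stmt14_klim g hgpos ρ' hreg) ε hε
  refine ⟨⌈exp T⌉₊ + 1, Nat.le_add_left 1 _, fun n hn m hm => ?_⟩
  have hnr : exp T ≤ (n:ℝ) := by
    calc exp T ≤ (⌈exp T⌉₊ : ℝ) := Nat.le_ceil _
    _ ≤ (n:ℝ) := by exact_mod_cast le_trans (Nat.le_succ _) hn
  have hnpos : (0:ℝ) < n := lt_of_lt_of_le (exp_pos T) hnr
  have hmpos : (0:ℝ) < m := lt_of_lt_of_le hnpos hm
  set t := Real.log n with htdef
  set u := Real.log m - Real.log n with hudef
  have htT : T ≤ t := (Real.le_log_iff_exp_le hnpos).2 hnr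
  have hu0 : 0 ≤ u := by
    have := Real.log_le_log hnpos hm
    linarith
  have hexp_t : exp t = (n:ℝ) := Real.exp_log hnpos
  have hexp_tu : exp (t + u) = m := by
    rw [show t + u = Real.log m by rw [htdef, hudef]; ring]
    exact Real.exp_log hmpos
  have hchain := hT t htT u hu0
  rw [hkdef] at hchain
  simp only [hexp_t, hexp_tu] at hchain
  -- hchain : |log (g m) - ρ' * (t + u) - (log (g n) - ρ' * t)| ≤ (u + 1) * ε
  have habs := abs_le.1 hchain
  have hgm : 0 < g m := hgpos m hmpos
  have hgn : 0 < g (n:ℝ) := hgpos _ hnpos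
  have hratio : (m / n) ^ (ρ' + ε) = exp ((ρ' + ε) * u) ∧
      (m / n) ^ (ρ' - ε) = exp ((ρ' - ε) * u) := by
    have hdivpos : 0 < m / n := div_pos hmpos hnpos
    have hlogdiv : Real.log (m / n) = u := by
      rw [Real.log_div (ne_of_gt hmpos) (ne_of_gt hnpos)]
    constructor <;> rw [Real.rpow_def_of_pos hdivpos, hlogdiv, mul_comm]
  constructor
  · have h1 : Real.log (g m) ≤ Real.log (g (n:ℝ)) + (ρ' + ε) * u + ε := by nlinarith [habs.2]
    have h2 : g m = exp (Real.log (g m)) := (Real.exp_log hgm).symm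
    rw [h2, hratio.1]
    calc exp (Real.log (g m)) ≤ exp (Real.log (g (n:ℝ)) + (ρ' + ε) * u + ε) := exp_le_exp.2 h1
    _ = exp ε * exp ((ρ' + ε) * u) * g (n:ℝ) := by
        rw [exp_add, exp_add, Real.exp_log hgn]; ring
  · have h1 : Real.log (g (n:ℝ)) + (ρ' - ε) * u - ε ≤ Real.log (g m) := by nlinarith [habs.1]
    have h2 : g m = exp (Real.log (g m)) := (Real.exp_log hgm).symm
    rw [h2, hratio.2]
    calc exp (-ε) * exp ((ρ' - ε) * u) * g (n:ℝ)
        = exp (Real.log (g (n:ℝ)) + (ρ' - ε) * u - ε) := by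
          rw [show Real.log (g (n:ℝ)) + (ρ' - ε) * u - ε
            = (-ε) + ((ρ' - ε) * u + Real.log (g (n:ℝ))) by ring, exp_add, exp_add,
            Real.exp_log hgn]
          ring
    _ ≤ exp (Real.log (g m)) := exp_le_exp.2 h1

lemma stmt14_sum_bounds (σ : ℝ) (hσ : σ < -1) (n : ℕ) (hn : 1 ≤ n) :
    Summable (fun j : ℕ => ((n:ℝ) + j) ^ σ) ∧
    -(n:ℝ)^(σ+1)/(σ+1) ≤ ∑' j : ℕ, ((n:ℝ) + j) ^ σ ∧
    ∑' j : ℕ, ((n:ℝ) + j) ^ σ ≤ (n:ℝ)^σ + -(n:ℝ)^(σ+1)/(σ+1) := by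
  have hnpos : (0:ℝ) < n := by exact_mod_cast hn
  have hs0 : Summable (fun m : ℕ => (m:ℝ) ^ σ) := Real.summable_nat_rpow.2 hσ
  have hs1 : Summable (fun j : ℕ => ((j + n : ℕ):ℝ) ^ σ) := (summable_nat_add_iff n).2 hs0
  have hsum : Summable (fun j : ℕ => ((n:ℝ) + j) ^ σ) := by
    apply hs1.congr
    intro j
    congr 1
    push_cast
    ring
  have hanti : ∀ N : ℕ, AntitoneOn (fun x : ℝ => x ^ σ) (Icc (n:ℝ) ((n:ℝ) + N)) :=
    fun N x hx y _ hxy =>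
      Real.rpow_le_rpow_of_nonpos (lt_of_lt_of_le hnpos hx.1) hxy (by linarith)
  have hint : IntegrableOn (fun x : ℝ => x ^ σ) (Ioi (n:ℝ)) := integrableOn_Ioi_rpow_of_lt hσ hnpos
  have hIval : ∫ x in Ioi (n:ℝ), x ^ σ = -(n:ℝ)^(σ+1)/(σ+1) := integral_Ioi_rpow_of_lt hσ hnpos
  have hIleJ : ∀ N : ℕ, (∫ x in (n:ℝ)..((n:ℝ)+N), x ^ σ) ≤ ∫ x in Ioi (n:ℝ), x ^ σ := by
    intro N
    rw [intervalIntegral.integral_of_le (by linarith [Nat.cast_nonneg (α := ℝ) N] :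
      (n:ℝ) ≤ (n:ℝ) + N)]
    apply setIntegral_mono_set hint
    · filter_upwards [ae_restrict_mem measurableSet_Ioi] with x hx
      exact rpow_nonneg (hnpos.trans hx).le σ
    · exact HasSubset.Subset.eventuallyLE Ioc_subset_Ioi_self
  refine ⟨hsum, ?_, ?_⟩
  · -- lower bound
    have hlow : ∀ N : ℕ, (∫ x in (n:ℝ)..((n:ℝ)+N), x ^ σ) ≤
        ∑ i ∈ Finset.range N, ((n:ℝ) + i) ^ σ := fun N => (hanti N).integral_le_sum
    have hpartial : ∀ N : ℕ, ∑ i ∈ Finset.range N, ((n:ℝ)+i)^σ ≤ ∑' j : ℕ, ((n:ℝ)+j)^σ :=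
      fun N => Summable.sum_le_tsum (Finset.range N)
        (fun i _ => rpow_nonneg (by positivity) σ) hsum
    have htendI : Tendsto (fun N : ℕ => ∫ x in (n:ℝ)..((n:ℝ)+N), x ^ σ) atTop
        (nhds (∫ x in Ioi (n:ℝ), x ^ σ)) :=
      intervalIntegral_tendsto_integral_Ioi _ hint
        (tendsto_atTop_add_const_left atTop (n:ℝ) tendsto_natCast_atTop_atTop)
    rw [← hIval]
    exact le_of_tendsto htendI (Filter.Eventually.of_forall fun N =>
      le_trans (hlow N) (hpartial N))
  · -- upper bound
    have h0 : ∑' j : ℕ, ((n:ℝ)+j)^σ = ((n:ℝ)+(0:ℕ))^σ + ∑' j : ℕ, ((n:ℝ)+((j+1:ℕ):ℝ))^σ :=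
      Summable.tsum_eq_zero_add hsum
    have htail : ∑' j : ℕ, ((n:ℝ)+((j+1:ℕ):ℝ))^σ ≤ ∫ x in Ioi (n:ℝ), x ^ σ := by
      apply Real.tsum_le_of_sum_range_le (fun i => rpow_nonneg (by positivity) σ)
      intro N
      calc ∑ i ∈ Finset.range N, ((n:ℝ)+((i+1:ℕ):ℝ))^σ
          ≤ ∫ x in (n:ℝ)..((n:ℝ)+N), x ^ σ := (hanti N).sum_le_integral
        _ ≤ ∫ x in Ioi (n:ℝ), x ^ σ := hIleJ N
    rw [h0]
    have : ((n:ℝ)+(0:ℕ))^σ = (n:ℝ)^σ := by norm_num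
    rw [this, ← hIval]
    linarith

lemma stmt14_main2 (g : ℝ → ℝ) (hmeas : Measurable g) (hgpos : ∀ x > 0, 0 < g x)
    (ρ' : ℝ) (hρ' : ρ' < -1)
    (hreg : ∀ a > 0, Tendsto (fun x => g (a * x) / g x) atTop (nhds (a ^ ρ')))
    (R : ℕ → ℝ) (hR : ∀ n : ℕ, R n = ∑' k : ℕ, g (n + k))
    (hRsum : ∀ n : ℕ, Summable (fun j : ℕ => g ((n:ℝ) + j))) :
    Tendsto (fun n : ℕ => R n / ((n:ℝ) * g n)) atTop (nhds (-1/(ρ'+1))) := by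
  rw [Metric.tendsto_nhds]
  intro δ hδ
  have hρ1 : ρ' + 1 < 0 := by linarith
  -- choose a suitable ε > 0
  have hcontp : Tendsto (fun e : ℝ => exp e * (-1/(ρ'+e+1))) (nhdsWithin 0 (Ioi 0))
      (nhds (-1/(ρ'+1))) := by
    have hC : ContinuousAt (fun e : ℝ => exp e * (-1/(ρ'+e+1))) 0 := by
      apply ContinuousAt.mul Real.continuous_exp.continuousAt
      apply ContinuousAt.div continuousAt_const
      · exact (continuousAt_const.add continuousAt_id).add continuousAt_const
      · simpa using by linarith
    have := hC.tendsto.mono_left (nhdsWithin_le_nhds (s := Ioi (0:ℝ)))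
    simpa using this
  have hcontm : Tendsto (fun e : ℝ => exp (-e) * (-1/(ρ'-e+1))) (nhdsWithin 0 (Ioi 0))
      (nhds (-1/(ρ'+1))) := by
    have hC : ContinuousAt (fun e : ℝ => exp (-e) * (-1/(ρ'-e+1))) 0 := by
      apply ContinuousAt.mul
      · exact (Real.continuous_exp.comp continuous_neg).continuousAt
      apply ContinuousAt.div continuousAt_const
      · exact (continuousAt_const.sub continuousAt_id).add continuousAt_const
      · simpa using by linarith
    have := hC.tendsto.mono_left (nhdsWithin_le_nhds (s := Ioi (0:ℝ)))
    simpa using this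
  have E1 := hcontp.eventually_lt_const (show -1/(ρ'+1) < -1/(ρ'+1) + δ/2 by linarith)
  have E2 := hcontm.eventually_const_lt (show -1/(ρ'+1) - δ < -1/(ρ'+1) by linarith)
  have E3 : ∀ᶠ e : ℝ in nhdsWithin 0 (Ioi 0), e < -(ρ'+1) := by
    have h : Tendsto (fun e : ℝ => e) (nhdsWithin 0 (Ioi 0)) (nhds 0) :=
      tendsto_id.mono_left nhdsWithin_le_nhds
    exact h.eventually_lt_const (by linarith : (0:ℝ) < -(ρ'+1))
  have E4 : ∀ᶠ e : ℝ in nhdsWithin (0:ℝ) (Ioi 0), 0 < e := eventually_mem_nhdsWithin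
  obtain ⟨ε, ⟨⟨hεa, hεb⟩, hεc⟩, hε0⟩ := (((E1.and E2).and E3).and E4).exists
  have hσp : ρ' + ε < -1 := by linarith
  have hσm : ρ' - ε < -1 := by linarith
  obtain ⟨N₀, hN₀1, hN₀⟩ := stmt14_potter g hmeas hgpos ρ' hreg ε hε0
  have ev1 : ∀ᶠ n : ℕ in atTop, N₀ ≤ n := eventually_ge_atTop N₀
  have ev2 : ∀ᶠ n : ℕ in atTop, exp ε * (1/(n:ℝ)) < δ/2 := by
    have h2 : Tendsto (fun n : ℕ => exp ε * (1/(n:ℝ))) atTop (nhds (exp ε * 0)) :=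
      tendsto_one_div_atTop_nhds_zero_nat.const_mul _
    rw [mul_zero] at h2
    exact h2.eventually_lt_const (by linarith)
  filter_upwards [ev1, ev2] with n hn1 hn2
  have hn1' : 1 ≤ n := le_trans hN₀1 hn1
  have hnpos : (0:ℝ) < n := by exact_mod_cast hn1'
  have hgn : 0 < g n := hgpos _ hnpos
  obtain ⟨hsp, _, hup⟩ := stmt14_sum_bounds (ρ'+ε) hσp n hn1'
  obtain ⟨hsm, hlm, _⟩ := stmt14_sum_bounds (ρ'-ε) hσm n hn1'
  have hterm_pos : ∀ j : ℕ, (0:ℝ) < (n:ℝ) + j := fun j =>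
    lt_of_lt_of_le hnpos (le_add_of_nonneg_right (Nat.cast_nonneg j))
  have hεp1 : ρ' + ε + 1 ≠ 0 := by linarith
  have hεm1 : ρ' - ε + 1 ≠ 0 := by linarith
  have key_up : R n ≤ exp ε * g n * ((n:ℝ) * (-1/(ρ'+ε+1)) + 1) := by
    rw [hR]
    have step1 : ∀ j : ℕ, g ((n:ℝ)+j) ≤ (exp ε * g n / (n:ℝ)^(ρ'+ε)) * ((n:ℝ)+j)^(ρ'+ε) := by
      intro j
      have h := (hN₀ n hn1 ((n:ℝ)+j) (le_add_of_nonneg_right (Nat.cast_nonneg j))).1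
      calc g ((n:ℝ)+j) ≤ exp ε * (((n:ℝ)+j)/n)^(ρ'+ε) * g n := h
      _ = (exp ε * g n / (n:ℝ)^(ρ'+ε)) * ((n:ℝ)+j)^(ρ'+ε) := by
          rw [Real.div_rpow (hterm_pos j).le hnpos.le]
          ring
    calc (∑' j : ℕ, g ((n:ℝ)+j)) ≤ ∑' j : ℕ, (exp ε * g n / (n:ℝ)^(ρ'+ε)) * ((n:ℝ)+j)^(ρ'+ε) :=
        Summable.tsum_le_tsum step1 (hRsum n) (hsp.mul_left _)
    _ = (exp ε * g n / (n:ℝ)^(ρ'+ε)) * ∑' j : ℕ, ((n:ℝ)+j)^(ρ'+ε) := tsum_mul_left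
    _ ≤ (exp ε * g n / (n:ℝ)^(ρ'+ε)) * ((n:ℝ)^(ρ'+ε) + -(n:ℝ)^(ρ'+ε+1)/(ρ'+ε+1)) := by
        apply mul_le_mul_of_nonneg_left hup (by positivity)
    _ = exp ε * g n * ((n:ℝ) * (-1/(ρ'+ε+1)) + 1) := by
        rw [Real.rpow_add_one (ne_of_gt hnpos)]
        have hnσp : ((n:ℝ))^(ρ'+ε) ≠ 0 := ne_of_gt (rpow_pos_of_pos hnpos _)
        field_simp
        ring
  have key_lo : exp (-ε) * g n * ((n:ℝ) * (-1/(ρ'-ε+1))) ≤ R n := by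
    rw [hR]
    have step1 : ∀ j : ℕ, (exp (-ε) * g n / (n:ℝ)^(ρ'-ε)) * ((n:ℝ)+j)^(ρ'-ε) ≤ g ((n:ℝ)+j) := by
      intro j
      have h := (hN₀ n hn1 ((n:ℝ)+j) (le_add_of_nonneg_right (Nat.cast_nonneg j))).2
      calc (exp (-ε) * g n / (n:ℝ)^(ρ'-ε)) * ((n:ℝ)+j)^(ρ'-ε)
          = exp (-ε) * (((n:ℝ)+j)/n)^(ρ'-ε) * g n := by
            rw [Real.div_rpow (hterm_pos j).le hnpos.le]
            ring
      _ ≤ g ((n:ℝ)+j) := h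
    calc exp (-ε) * g n * ((n:ℝ) * (-1/(ρ'-ε+1)))
        ≤ (exp (-ε) * g n / (n:ℝ)^(ρ'-ε)) * (-(n:ℝ)^(ρ'-ε+1)/(ρ'-ε+1)) := by
          rw [Real.rpow_add_one (ne_of_gt hnpos)]
          have hnσm : ((n:ℝ))^(ρ'-ε) ≠ 0 := ne_of_gt (rpow_pos_of_pos hnpos _)
          apply le_of_eq
          field_simp
    _ ≤ (exp (-ε) * g n / (n:ℝ)^(ρ'-ε)) * ∑' j : ℕ, ((n:ℝ)+j)^(ρ'-ε) := by
          apply mul_le_mul_of_nonneg_left hlm (by positivity)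
    _ = ∑' j : ℕ, (exp (-ε) * g n / (n:ℝ)^(ρ'-ε)) * ((n:ℝ)+j)^(ρ'-ε) := tsum_mul_left.symm
    _ ≤ ∑' j : ℕ, g ((n:ℝ)+j) := Summable.tsum_le_tsum step1 (hsm.mul_left _) (hRsum n)
  have hden : (0:ℝ) < (n:ℝ) * g n := by positivity
  have h2u : (exp ε * g n * ((n:ℝ) * (-1/(ρ'+ε+1)) + 1)) / ((n:ℝ)*g n)
      = exp ε * (-1/(ρ'+ε+1)) + exp ε * (1/(n:ℝ)) := by
    field_simp
  have h2l : (exp (-ε) * g n * ((n:ℝ) * (-1/(ρ'-ε+1)))) / ((n:ℝ)*g n)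
      = exp (-ε) * (-1/(ρ'-ε+1)) := by
    field_simp
  have hupper : R n / ((n:ℝ) * g n) < -1/(ρ'+1) + δ := by
    have h1 := (div_le_div_iff_of_pos_right hden).2 key_up
    rw [h2u] at h1
    have := add_lt_add hεa hn2
    linarith
  have hlower : -1/(ρ'+1) - δ < R n / ((n:ℝ) * g n) := by
    have h1 := (div_le_div_iff_of_pos_right hden).2 key_lo
    rw [h2l] at h1
    linarith
  rw [Real.dist_eq, abs_lt]
  constructor <;> linarith

lemma stmt14_ratio (g : ℝ → ℝ) (hmeas : Measurable g) (hgpos : ∀ x > 0, 0 < g x)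
    (ρ' : ℝ)
    (hreg : ∀ a > 0, Tendsto (fun x => g (a * x) / g x) atTop (nhds (a ^ ρ')))
    (x c : ℕ → ℝ) (c₀ : ℝ) (hc₀ : 0 < c₀)
    (hx : Tendsto x atTop atTop) (hc : Tendsto c atTop (nhds c₀))
    (hcpos : ∀ᶠ n in atTop, 0 < c n) :
    Tendsto (fun n => g (c n * x n) / g (x n)) atTop (nhds (c₀ ^ ρ')) := by
  set k : ℝ → ℝ := fun t => log (g (exp t)) - ρ' * t with hkdef
  have hlogc : Tendsto (fun n => Real.log (c n)) atTop (nhds (Real.log c₀)) :=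
    (Real.continuousAt_log (ne_of_gt hc₀)).tendsto.comp hc
  have hseq := stmt14_seq k (stmt14_kmeas g hmeas ρ') (stmt14_klim g hgpos ρ' hreg)
    (fun n => Real.log (x n)) (fun n => Real.log (c n)) (Real.log c₀)
    (Real.tendsto_log_atTop.comp hx) hlogc
  have hsum : Tendsto (fun n =>
      (k (Real.log (x n) + Real.log (c n)) - k (Real.log (x n))) + ρ' * Real.log (c n))
      atTop (nhds (0 + ρ' * Real.log c₀)) :=
    hseq.add (hlogc.const_mul ρ')
  have hexp := (Real.continuous_exp.continuousAt (x := 0 + ρ' * Real.log c₀)).tendsto.comp hsum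
  have hval : exp (0 + ρ' * Real.log c₀) = c₀ ^ ρ' := by
    rw [zero_add, Real.rpow_def_of_pos hc₀, mul_comm]
  rw [hval] at hexp
  have hxpos : ∀ᶠ n in atTop, (0:ℝ) < x n := hx.eventually_gt_atTop 0
  apply hexp.congr'
  filter_upwards [hcpos, hxpos] with n hcn hxn
  have hcx : 0 < c n * x n := mul_pos hcn hxn
  have hgx : 0 < g (x n) := hgpos _ hxn
  have hgcx : 0 < g (c n * x n) := hgpos _ hcx
  show exp ((k (Real.log (x n) + Real.log (c n)) - k (Real.log (x n))) + ρ' * Real.log (c n))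
      = g (c n * x n) / g (x n)
  have hearg : Real.exp (Real.log (x n) + Real.log (c n)) = c n * x n := by
    rw [Real.exp_add, Real.exp_log hxn, Real.exp_log hcn]; ring
  have hearg2 : Real.exp (Real.log (x n)) = x n := Real.exp_log hxn
  rw [hkdef]
  simp only [hearg, hearg2]
  rw [show log (g (c n * x n)) - ρ' * (Real.log (x n) + Real.log (c n)) -
      (log (g (x n)) - ρ' * Real.log (x n)) + ρ' * Real.log (c n)
      = log (g (c n * x n)) - log (g (x n)) by ring]
  rw [Real.exp_sub, Real.exp_log hgcx, Real.exp_log hgx]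

/-- Karamata-type result for tails: if `g` is measurable, positive on `(0,∞)` and
regularly varying at `+∞` with index `ρ' < −1`, then `Σ_{k≥1} g(k)` converges, the tail
sums `R(n) = Σ_{k≥n} g(k)` satisfy `R(n) ~ −n g(n)/(ρ'+1)`, and `R` varies regularly with
index `ρ'+1`. -/
theorem stmt14 (g : ℝ → ℝ) (hmeas : Measurable g) (hgpos : ∀ x > 0, 0 < g x)
    (ρ' : ℝ) (hρ' : ρ' < -1)
    (hreg : ∀ a > 0, Tendsto (fun x => g (a * x) / g x) atTop (nhds (a ^ ρ')))
    (R : ℕ → ℝ) (hR : ∀ n : ℕ, R n = ∑' k : ℕ, g (n + k)) :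
    Summable (fun k : ℕ => g (k + 1)) ∧
    Tendsto (fun n : ℕ => R n / (-((n : ℝ) * g n) / (ρ' + 1))) atTop (nhds 1) ∧
    ∀ a > 0, Tendsto (fun n : ℕ => R ⌊a * (n : ℝ)⌋₊ / R n) atTop (nhds (a ^ (ρ' + 1))) := by
  have hρ1 : ρ' + 1 < 0 := by linarith
  have hLpos : 0 < -1/(ρ'+1) := div_pos_iff.2 (Or.inr ⟨by norm_num, by linarith⟩)
  have hLne : (-1/(ρ'+1)) ≠ 0 := ne_of_gt hLpos
  obtain ⟨N₁, hN₁1, hN₁⟩ := stmt14_potter g hmeas hgpos ρ' hreg ((-1-ρ')/2) (by linarith)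
  have hσ₀ : ρ' + (-1-ρ')/2 < -1 := by linarith
  have hN₁pos : (0:ℝ) < N₁ := by exact_mod_cast Nat.lt_of_lt_of_le Nat.zero_lt_one hN₁1
  obtain ⟨hsumr, -, -⟩ := stmt14_sum_bounds (ρ'+(-1-ρ')/2) hσ₀ N₁ hN₁1
  have hterm_pos : ∀ j : ℕ, (0:ℝ) < (N₁:ℝ) + j := fun j =>
    lt_of_lt_of_le hN₁pos (le_add_of_nonneg_right (Nat.cast_nonneg j))
  have hsumN : Summable (fun j : ℕ => g ((N₁:ℝ) + j)) := by
    apply Summable.of_nonneg_of_le (fun j => (hgpos _ (hterm_pos j)).le) (fun j => ?_)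
      (hsumr.mul_left (exp ((-1-ρ')/2) * g N₁ / (N₁:ℝ)^(ρ'+(-1-ρ')/2)))
    have h := (hN₁ N₁ le_rfl ((N₁:ℝ)+j) (le_add_of_nonneg_right (Nat.cast_nonneg j))).1
    calc g ((N₁:ℝ)+j) ≤ exp ((-1-ρ')/2) * (((N₁:ℝ)+j)/N₁)^(ρ'+(-1-ρ')/2) * g N₁ := h
    _ = (exp ((-1-ρ')/2) * g N₁ / (N₁:ℝ)^(ρ'+(-1-ρ')/2)) * ((N₁:ℝ)+j)^(ρ'+(-1-ρ')/2) := by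
        rw [Real.div_rpow (hterm_pos j).le hN₁pos.le]
        ring
  have hsumf : Summable (fun m : ℕ => g m) := by
    rw [← summable_nat_add_iff N₁]
    apply hsumN.congr
    intro j
    congr 1
    push_cast
    ring
  have goal1 : Summable (fun k : ℕ => g (k + 1)) := by
    apply ((summable_nat_add_iff 1).2 hsumf).congr
    intro j
    congr 1
    push_cast
    ring
  have hRsum : ∀ n : ℕ, Summable (fun j : ℕ => g ((n:ℝ) + j)) := by
    intro n
    apply ((summable_nat_add_iff n).2 hsumf).congr
    intro j
    congr 1
    push_cast
    ring
  have main2 := stmt14_main2 g hmeas hgpos ρ' hρ' hreg R hR hRsum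
  have hRpos : ∀ n : ℕ, 1 ≤ n → 0 < R n := by
    intro n hn
    have hnpos : (0:ℝ) < n := by exact_mod_cast hn
    have hp : ∀ j : ℕ, (0:ℝ) < (n:ℝ) + j := fun j =>
      lt_of_lt_of_le hnpos (le_add_of_nonneg_right (Nat.cast_nonneg j))
    rw [hR]
    exact Summable.tsum_pos (hRsum n) (fun j => (hgpos _ (hp j)).le) 0 (hgpos _ (hp 0))
  refine ⟨goal1, ?_, ?_⟩
  · have h := main2.div_const (-1/(ρ'+1))
    rw [div_self hLne] at h
    apply h.congr'
    filter_upwards [eventually_ge_atTop 1] with n hn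
    have hnpos : (0:ℝ) < n := by exact_mod_cast hn
    have hgn : 0 < g n := hgpos _ hnpos
    have hne1 : (ρ'+1) ≠ 0 := by linarith
    field_simp
  · intro a ha
    have hmtop : Tendsto (fun n : ℕ => ⌊a * (n:ℝ)⌋₊) atTop atTop :=
      tendsto_nat_floor_atTop.comp (Tendsto.const_mul_atTop ha tendsto_natCast_atTop_atTop)
    have hc : Tendsto (fun n : ℕ => (⌊a * (n:ℝ)⌋₊ : ℝ) / n) atTop (nhds a) :=
      (tendsto_nat_floor_mul_div_atTop ha.le).comp tendsto_natCast_atTop_atTop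
    have hcpos : ∀ᶠ n : ℕ in atTop, 0 < (⌊a * (n:ℝ)⌋₊ : ℝ) / n := by
      filter_upwards [hmtop.eventually_ge_atTop 1, eventually_ge_atTop 1] with n h1 h2
      have : (0:ℝ) < (⌊a * (n:ℝ)⌋₊ : ℝ) := by exact_mod_cast Nat.lt_of_lt_of_le Nat.zero_lt_one h1
      have : (0:ℝ) < (n:ℝ) := by exact_mod_cast h2
      positivity
    have hratio := stmt14_ratio g hmeas hgpos ρ' hreg (fun n : ℕ => (n:ℝ))
      (fun n : ℕ => (⌊a * (n:ℝ)⌋₊ : ℝ) / n) a ha tendsto_natCast_atTop_atTop hc hcpos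
    have T2 : Tendsto (fun n : ℕ => g ((⌊a * (n:ℝ)⌋₊:ℝ)) / g (n:ℝ)) atTop (nhds (a ^ ρ')) := by
      apply hratio.congr'
      filter_upwards [eventually_ge_atTop 1] with n hn
      have hnne : (n:ℝ) ≠ 0 := by
        have : (0:ℝ) < n := by exact_mod_cast hn
        exact ne_of_gt this
      rw [div_mul_cancel₀ _ hnne]
    have T1 := main2.comp hmtop
    have T4 : Tendsto (fun n : ℕ => ((n:ℝ) * g n) / R n) atTop (nhds ((-1/(ρ'+1))⁻¹)) := by
      apply (main2.inv₀ hLne).congr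
      intro n
      exact inv_div _ _
    have Tall := (T1.mul (hc.mul T2)).mul T4
    have hval : (-1/(ρ'+1)) * (a * a^ρ') * (-1/(ρ'+1))⁻¹ = a ^ (ρ'+1) := by
      rw [Real.rpow_add_one (ne_of_gt ha)]
      rw [mul_comm ((-1/(ρ'+1))) (a * a^ρ'), mul_assoc, mul_inv_cancel₀ hLne, mul_one]
      ring
    rw [hval] at Tall
    apply Tall.congr'
    filter_upwards [eventually_ge_atTop 1, hmtop.eventually_ge_atTop 1] with n hn hmn
    have hnpos : (0:ℝ) < n := by exact_mod_cast hn
    have hmpos : (0:ℝ) < (⌊a * (n:ℝ)⌋₊:ℝ) := by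
      exact_mod_cast Nat.lt_of_lt_of_le Nat.zero_lt_one hmn
    have hgn : 0 < g n := hgpos _ hnpos
    have hgm : 0 < g (⌊a * (n:ℝ)⌋₊:ℝ) := hgpos _ hmpos
    have hRn : 0 < R n := hRpos n hn
    simp only [Function.comp_apply]
    field_simp
end

section
/- Let x₀ ∈ [0,+∞] and let f and g be positive functions on a neighborhood of x₀ such that f(x) → L as x → x₀, where L ∈ {0, +∞}, and f(x)/g(x) → 1 as x → x₀. Let h be a positive measurable function that varies regularly at L with some index ρ, i.e. for every a > 0, h(ay)/h(y) → a^ρ as y → L. Then h(f(x))/h(g(x)) → 1 as x → x₀. -/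
/-!
With `k t = log (h (exp t))`, regular variation of `h` with index `ρ` says that
`k (t + v) - k t → ρ v` for each fixed `v`, along `t → ±∞`. The heart of the matter is the
uniform convergence theorem: since `k` is measurable, this convergence is locally uniform in `v`,
so `k (log f) - k (log g) → 0` as soon as `log f - log g → 0`. For sequences `s n`, `t n` with
`s n - t n → 0`, the shifts that are `ε`-good for `s` (resp. `t`) from index `n` on fill most of
an interval once `n` is large; a measure count then produces a shift `w` good for `s n` such that
`w + (s n - t n)` is good for `t n`, and `k (s n) - k (t n)` is the difference of two small terms.
-/

open Filter Set MeasureTheory Topology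

theorem tendsto_measure_inter_iInter_ge {α : Type*} [MeasurableSpace α] (μ : Measure α)
    (S : Set α) (P : ℕ → Set α) (hP : ∀ x ∈ S, ∀ᶠ m in atTop, x ∈ P m) :
    Tendsto (fun n => μ (S ∩ ⋂ m ≥ n, P m)) atTop (𝓝 (μ S)) := by
  have hmono : Monotone fun n => S ∩ ⋂ m ≥ n, P m := fun a b hab =>
    inter_subset_inter_right S (biInter_mono (fun m hm => le_trans hab hm) fun _ _ => le_rfl)
  have hunion : ⋃ n, S ∩ ⋂ m ≥ n, P m = S := by
    refine Subset.antisymm (iUnion_subset fun n => inter_subset_left) fun x hx => ?_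
    obtain ⟨N, hN⟩ := eventually_atTop.mp (hP x hx)
    exact mem_iUnion.mpr ⟨N, hx, mem_iInter₂.mpr hN⟩
  have := tendsto_measure_iUnion_atTop (μ := μ) hmono
  rwa [hunion] at this

theorem seq_tendsto_sub_of_tendsto_add_sub {k : ℝ → ℝ} (hk : Measurable k) {F : Filter ℝ}
    (hF : ∀ v, Tendsto (fun t => k (t + v) - k t) F (𝓝 0)) {s t : ℕ → ℝ}
    (hs : Tendsto s atTop F) (ht : Tendsto t atTop F)
    (hst : Tendsto (fun m => s m - t m) atTop (𝓝 0)) :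
    Tendsto (fun m => k (s m) - k (t m)) atTop (𝓝 0) := by
  rw [Metric.tendsto_nhds]
  intro ε hε
  have hvol : ∀ r : ℕ → ℝ, Tendsto r atTop F → ∀ a b : ℝ,
      Tendsto (fun n => volume (Icc a b ∩ ⋂ m ≥ n, {v | |k (r m + v) - k (r m)| ≤ ε / 3}))
        atTop (𝓝 (ENNReal.ofReal (b - a))) := by
    intro r hr a b
    rw [← Real.volume_Icc]
    refine tendsto_measure_inter_iInter_ge _ _ _ fun v _ => ?_
    filter_upwards [Metric.tendsto_nhds.mp ((hF v).comp hr) (ε / 3) (by positivity)] with m hm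
    simpa [Real.dist_eq] using hm.le
  have hmeas : ∀ (r : ℕ → ℝ) (a b : ℝ) n,
      MeasurableSet (Icc a b ∩ ⋂ m ≥ n, {v | |k (r m + v) - k (r m)| ≤ ε / 3}) := by
    intro r a b n
    refine measurableSet_Icc.inter (.iInter fun m => .iInter fun _ => measurableSet_le ?_ ?_)
    all_goals fun_prop
  set goodT := fun n => Icc 0 1 ∩ ⋂ m ≥ n, {v | |k (t m + v) - k (t m)| ≤ ε / 3}
  set goodS := fun n => Icc (-1) 2 ∩ ⋂ m ≥ n, {w | |k (s m + w) - k (s m)| ≤ ε / 3}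
  -- Once `|s n - t n| < 1`, `goodT n` shifted by `-(s n - t n)` lies in `Icc (-1) 2`, and the
  -- two sets have total measure larger than that of `Icc (-1) 2`, so they meet.
  have hbig : ∀ᶠ n in atTop,
      volume (Icc (-1 : ℝ) 2) < volume (goodS n) + volume (goodT n) := by
    refine ((hvol s hs (-1) 2).add (hvol t ht 0 1)).eventually_const_lt ?_
    rw [Real.volume_Icc, ← ENNReal.ofReal_add (by norm_num) (by norm_num)]
    exact ENNReal.ofReal_lt_ofReal_iff'.mpr ⟨by norm_num, by norm_num⟩
  filter_upwards [hbig, Metric.tendsto_nhds.mp hst 1 one_pos] with n hn hd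
  rw [Real.dist_eq, sub_zero] at hd
  have hsub : (· + (s n - t n)) ⁻¹' goodT n ⊆ Icc (-1) 2 := fun w hw => by
    have := hw.1
    simp only [mem_Icc] at this ⊢
    constructor <;> linarith [abs_lt.mp hd]
  obtain ⟨w, hwS, hwT⟩ := nonempty_inter_of_measure_lt_add' volume (hmeas s (-1) 2 n)
    inter_subset_left hsub (by rwa [measure_preimage_add_right])
  have h1 : |k (t n + (w + (s n - t n))) - k (t n)| ≤ ε / 3 := mem_iInter₂.mp hwT.2 n le_rfl
  have h2 : |k (s n + w) - k (s n)| ≤ ε / 3 := mem_iInter₂.mp hwS.2 n le_rfl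
  rw [show t n + (w + (s n - t n)) = s n + w by ring] at h1
  rw [Real.dist_eq, sub_zero]
  calc |k (s n) - k (t n)| = |(k (s n + w) - k (t n)) - (k (s n + w) - k (s n))| := by ring_nf
    _ ≤ |k (s n + w) - k (t n)| + |k (s n + w) - k (s n)| := abs_sub _ _
    _ < ε := by linarith

theorem tendsto_sub_of_tendsto_add_sub {k : ℝ → ℝ} (hk : Measurable k) (ρ : ℝ)
    {F : Filter ℝ} [F.IsCountablyGenerated]
    (hF : ∀ v, Tendsto (fun t => k (t + v) - k t) F (𝓝 (ρ * v)))
    {ι : Type*} {l : Filter ι} {a b : ι → ℝ} (ha : Tendsto a l F) (hb : Tendsto b l F)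
    (hab : Tendsto (fun x => a x - b x) l (𝓝 0)) :
    Tendsto (fun x => k (a x) - k (b x)) l (𝓝 0) := by
  have hF₀ : ∀ v, Tendsto (fun t => (k (t + v) - ρ * (t + v)) - (k t - ρ * t)) F (𝓝 0) :=
    fun v => (sub_self (ρ * v) ▸ (hF v).sub_const (ρ * v)).congr fun t => by ring
  have hpair : Tendsto (fun p : ℝ × ℝ => (k p.1 - ρ * p.1) - (k p.2 - ρ * p.2))
      (F ×ˢ F ⊓ comap (fun p => p.1 - p.2) (𝓝 0)) (𝓝 0) := by
    refine tendsto_iff_seq_tendsto.mpr fun p hp => ?_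
    rw [tendsto_inf, tendsto_prod_iff', tendsto_comap_iff] at hp
    exact seq_tendsto_sub_of_tendsto_add_sub (k := fun t => k t - ρ * t) (by fun_prop) hF₀
      hp.1.1 hp.1.2 hp.2
  have h₀ := hpair.comp <| tendsto_inf.mpr ⟨ha.prodMk hb, tendsto_comap_iff.mpr hab⟩
  exact (add_zero (0 : ℝ) ▸ mul_zero ρ ▸ h₀.add (hab.const_mul ρ)).congr fun x => by
    simp only [Function.comp_apply]; ring

theorem tendsto_log_comp_exp_add_sub {h : ℝ → ℝ} (hpos : ∀ y > 0, 0 < h y) {ρ : ℝ}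
    {L F : Filter ℝ} (hreg : ∀ a > 0, Tendsto (fun y => h (a * y) / h y) L (𝓝 (a ^ ρ)))
    (hexp : Tendsto Real.exp F L) (v : ℝ) :
    Tendsto (fun t => Real.log (h (Real.exp (t + v))) - Real.log (h (Real.exp t))) F
      (𝓝 (ρ * v)) := by
  have hlim := ((Real.continuousAt_log (Real.rpow_pos_of_pos (Real.exp_pos v) ρ).ne').tendsto.comp
    ((hreg _ (Real.exp_pos v)).comp hexp))
  rw [Real.log_rpow (Real.exp_pos v), Real.log_exp] at hlim
  refine hlim.congr fun t => ?_
  simp only [Function.comp_apply, Real.exp_add, mul_comm (Real.exp t)]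
  rw [Real.log_div (hpos _ (by positivity)).ne' (hpos _ (Real.exp_pos t)).ne']

/-- If `f → L` (where `L` is `0⁺` or `+∞`, encoded by the filter `L`, i.e. `𝓝[>] 0` or
`atTop`), `f/g → 1` along the approach to `x₀` (encoded by the filter `l`, covering any
`x₀ ∈ [0,+∞]`), `f` and `g` are positive, and `h` is a positive measurable function
regularly varying at `L` with index `ρ`, then `h(f(x))/h(g(x)) → 1`. -/
theorem stmt15 {ι : Type*} (l : Filter ι) (f g : ι → ℝ) (h : ℝ → ℝ) (ρ : ℝ)
    (L : Filter ℝ) (hL : L = nhdsWithin (0 : ℝ) (Set.Ioi 0) ∨ L = atTop)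
    (hfpos : ∀ᶠ x in l, 0 < f x) (hgpos : ∀ᶠ x in l, 0 < g x)
    (hmeas : Measurable h) (hpos : ∀ y > 0, 0 < h y)
    (hf : Tendsto f l L)
    (hfg : Tendsto (fun x => f x / g x) l (nhds 1))
    (hreg : ∀ a > 0, Tendsto (fun y => h (a * y) / h y) L (nhds (a ^ ρ))) :
    Tendsto (fun x => h (f x) / h (g x)) l (nhds 1) := by
  have hlog : Tendsto (fun x => Real.log (f x) - Real.log (g x)) l (𝓝 0) := by
    refine (Real.log_one ▸ (Real.continuousAt_log one_ne_zero).tendsto.comp hfg).congr' ?_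
    filter_upwards [hfpos, hgpos] with x hfx hgx
    exact Real.log_div hfx.ne' hgx.ne'
  obtain ⟨F, _, hexp, hlogf, hlogg⟩ : ∃ F : Filter ℝ, F.IsCountablyGenerated ∧
      Tendsto Real.exp F L ∧ Tendsto (fun x => Real.log (f x)) l F ∧
        Tendsto (fun x => Real.log (g x)) l F := by
    rcases hL with rfl | rfl
    · have hlogf := Real.tendsto_log_nhdsGT_zero.comp hf
      exact ⟨atBot, inferInstance, Real.tendsto_exp_atBot_nhdsGT, hlogf,
        by simpa using hlogf.atBot_add hlog.neg⟩
    · have hlogf := Real.tendsto_log_atTop.comp hf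
      exact ⟨atTop, inferInstance, Real.tendsto_exp_atTop, hlogf,
        by simpa using hlogf.atTop_add hlog.neg⟩
  have hdiff := tendsto_sub_of_tendsto_add_sub
    (Real.measurable_log.comp (hmeas.comp Real.measurable_exp)) ρ
    (tendsto_log_comp_exp_add_sub hpos hreg hexp) hlogf hlogg hlog
  refine (Real.exp_zero ▸ (Real.continuous_exp.tendsto 0).comp hdiff).congr' ?_
  filter_upwards [hfpos, hgpos] with x hfx hgx
  simp only [Function.comp_apply, Real.exp_log hfx, Real.exp_log hgx, Real.exp_sub,
    Real.exp_log (hpos _ hfx), Real.exp_log (hpos _ hgx)]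
end

section
/- Let (m_n)_{n≥1} be a positive sequence that is regularly varying with some index ρ, i.e. for every a > 0, m_{⌊an⌋}/m_n → a^ρ as n → ∞, and let (u_n)_{n≥1} be positive integers with u_n → ∞ and u_n/n → 0 as n → ∞. Then Σ_{k=n}^{n+u_n−1} m_k ~ u_n·m_n as n → ∞, i.e. ( Σ_{k=n}^{n+u_n−1} m_k ) / ( u_n m_n ) → 1. -/
open Filter Finset
open MeasureTheory Set

lemma stmt16_egorov (m : ℕ → ℝ) (ρ : ℝ)
    (hreg : ∀ a : ℝ, 0 < a →
      Tendsto (fun n : ℕ => m ⌊a * (n : ℝ)⌋₊ / m n) atTop (nhds (a ^ ρ))) :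
    ∃ A : Set ℝ, MeasurableSet A ∧ A ⊆ Set.Icc (1/2 : ℝ) (9/10) ∧
      ENNReal.ofReal (39/100) ≤ volume A ∧
      TendstoUniformlyOn (fun (k : ℕ) (a : ℝ) => m ⌊a * (k : ℝ)⌋₊ / m k)
        (fun a => a ^ ρ) atTop A := by
  set s₀ : Set ℝ := Set.Icc (1/2 : ℝ) (9/10) with hs₀
  have hs₀m : MeasurableSet s₀ := measurableSet_Icc
  have hvol : volume s₀ = ENNReal.ofReal (2/5) := by
    rw [hs₀, Real.volume_Icc]; norm_num
  have hF : ∀ k : ℕ, StronglyMeasurable (fun a : ℝ => m ⌊a * (k : ℝ)⌋₊ / m k) := by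
    intro k
    refine Measurable.stronglyMeasurable ?_
    exact (measurable_from_top.comp ((measurable_id.mul_const _).nat_floor)).div_const _
  set g' : ℝ → ℝ := fun a => (max a (1/2)) ^ ρ with hg'
  have hg'cont : Continuous g' := by
    rw [continuous_iff_continuousAt]
    intro x
    have h1 : ContinuousAt (fun y : ℝ => y ^ ρ) (max x (1/2)) :=
      Real.continuousAt_rpow_const _ _ (Or.inl (by positivity))
    exact ContinuousAt.comp (g := fun y : ℝ => y ^ ρ) (f := fun a : ℝ => max a (1/2)) h1
      ((continuous_id.max continuous_const).continuousAt)
  have hG : StronglyMeasurable g' := hg'cont.stronglyMeasurable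
  have hg'eq : ∀ a ∈ s₀, g' a = a ^ ρ := by
    intro a ha
    simp only [hg']
    rw [max_eq_left ha.1]
  obtain ⟨t, hts, htm, htμ, hunif⟩ :=
    MeasureTheory.tendstoUniformlyOn_of_ae_tendsto (μ := volume) hF hG hs₀m
      (by rw [hvol]; exact ENNReal.ofReal_ne_top)
      (ae_of_all _ (fun a ha => by
        rw [hg'eq a ha]
        exact hreg a (by have := ha.1; norm_num at this ⊢; linarith)))
      (ε := 1/100) (by norm_num)
  refine ⟨s₀ \ t, hs₀m.diff htm, Set.diff_subset, ?_, ?_⟩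
  · have hd := measure_diff hts htm.nullMeasurableSet
      (ne_top_of_le_ne_top (by rw [hvol]; exact ENNReal.ofReal_ne_top) (measure_mono hts))
    rw [hd, hvol]
    calc ENNReal.ofReal (39/100) = ENNReal.ofReal (2/5) - ENNReal.ofReal (1/100) := by
          rw [← ENNReal.ofReal_sub _ (by norm_num)]; norm_num
      _ ≤ ENNReal.ofReal (2/5) - volume t := tsub_le_tsub_left htμ _
  · rw [Metric.tendstoUniformlyOn_iff] at hunif ⊢
    intro ε hε
    filter_upwards [hunif ε hε] with k hk a ha
    have := hk a ha
    rwa [hg'eq a ha.1] at this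

lemma stmt16_inter (A : Set ℝ) (hAm : MeasurableSet A) (hAsub : A ⊆ Set.Icc (1/2:ℝ) (9/10))
    (hAvol : ENNReal.ofReal (39/100) ≤ volume A)
    (lam : ℝ) (h1 : 1 ≤ lam) (h2 : lam ≤ 11/10) :
    ∃ s, s ∈ A ∧ lam * s ∈ A := by
  have hlam0 : lam ≠ 0 := by linarith
  set B : Set ℝ := (lam * ·) ⁻¹' A with hB
  have hBm : MeasurableSet B := (measurable_const_mul lam) hAm
  have hBvol : ENNReal.ofReal (39/110) ≤ volume B := by
    rw [hB, Real.volume_preimage_mul_left hlam0]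
    have h10 : (10/11 : ℝ) ≤ |lam⁻¹| := by
      rw [abs_of_pos (by positivity)]
      rw [le_inv_comm₀ (by norm_num) (by linarith)]
      linarith
    calc ENNReal.ofReal (39/110) = ENNReal.ofReal ((10/11) * (39/100)) := by norm_num
      _ ≤ ENNReal.ofReal (|lam⁻¹| * (39/100)) := by
          apply ENNReal.ofReal_le_ofReal; nlinarith
      _ = ENNReal.ofReal |lam⁻¹| * ENNReal.ofReal (39/100) := by
          rw [ENNReal.ofReal_mul (abs_nonneg _)]
      _ ≤ ENNReal.ofReal |lam⁻¹| * volume A := by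
          exact mul_le_mul_right hAvol _
  have hU : A ∪ B ⊆ Set.Icc (5/11 : ℝ) (9/10) := by
    rintro a (ha | ha)
    · obtain ⟨h3, h4⟩ := hAsub ha
      exact ⟨by linarith, h4⟩
    · obtain ⟨h3, h4⟩ := hAsub ha
      constructor
      · nlinarith
      · nlinarith
  have hUvol : volume (A ∪ B) ≤ ENNReal.ofReal (49/110) := by
    calc volume (A ∪ B) ≤ volume (Set.Icc (5/11 : ℝ) (9/10)) := measure_mono hU
      _ = ENNReal.ofReal (49/110) := by rw [Real.volume_Icc]; norm_num
  have hne : volume (A ∩ B) ≠ 0 := by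
    intro h0
    have key := measure_union_add_inter (μ := volume) A hBm
    rw [h0, add_zero] at key
    have : ENNReal.ofReal (39/100) + ENNReal.ofReal (39/110) ≤ ENNReal.ofReal (49/110) := by
      calc ENNReal.ofReal (39/100) + ENNReal.ofReal (39/110) ≤ volume A + volume B :=
            add_le_add hAvol hBvol
        _ = volume (A ∪ B) := key.symm
        _ ≤ ENNReal.ofReal (49/110) := hUvol
    rw [← ENNReal.ofReal_add (by norm_num) (by norm_num),
      ENNReal.ofReal_le_ofReal_iff (by norm_num)] at this
    norm_num at this
  obtain ⟨s, hs1, hs2⟩ := nonempty_of_measure_ne_zero hne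
  exact ⟨s, hs1, hs2⟩

set_option maxHeartbeats 2000000 in
lemma stmt16_unif (m : ℕ → ℝ) (hmpos : ∀ n, 0 < m n) (ρ : ℝ)
    (hreg : ∀ a : ℝ, 0 < a →
      Tendsto (fun n : ℕ => m ⌊a * (n : ℝ)⌋₊ / m n) atTop (nhds (a ^ ρ)))
    {ε : ℝ} (hε : 0 < ε) :
    ∃ δ : ℝ, 0 < δ ∧ ∃ N : ℕ, 1 ≤ N ∧ ∀ n, N ≤ n → ∀ j : ℕ, n ≤ j →
      (j : ℝ) ≤ (1 + δ) * n → |m j / m n - 1| ≤ ε := by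
  set ε' := min ε 1 with hε'def
  have hε'pos : 0 < ε' := lt_min hε one_pos
  have hε'le : ε' ≤ ε := min_le_left _ _
  have hε'1 : ε' ≤ 1 := min_le_right _ _
  -- continuity of rpow at 1
  have hcont := Real.continuousAt_rpow_const 1 ρ (Or.inl one_ne_zero)
  rw [Metric.continuousAt_iff] at hcont
  obtain ⟨δ₁, hδ₁pos, hδ₁⟩ := hcont (ε'/4) (by positivity)
  set δ := min (δ₁/2) (1/10) with hδdef
  have hδpos : 0 < δ := lt_min (by positivity) (by norm_num)
  have hδle : δ ≤ 1/10 := min_le_right _ _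
  have hpow : ∀ lam : ℝ, 1 ≤ lam → lam ≤ 1 + δ → |lam ^ ρ - 1| < ε'/4 := by
    intro lam hl1 hl2
    have hd : dist lam 1 < δ₁ := by
      rw [Real.dist_eq, abs_of_nonneg (by linarith)]
      have : δ ≤ δ₁/2 := min_le_left _ _
      linarith
    have := hδ₁ hd
    rwa [Real.dist_eq, Real.one_rpow] at this
  -- lower bound for s ^ ρ on [1/2, 1]
  set c := min ((1/2 : ℝ) ^ ρ) 1 with hcdef
  have hcpos : 0 < c := lt_min (Real.rpow_pos_of_pos (by norm_num) _) one_pos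
  have hrange : ∀ x : ℝ, 1/2 ≤ x → x ≤ 1 → c ≤ x ^ ρ := by
    intro x hx1 hx2
    rcases le_or_gt 0 ρ with hρ | hρ
    · exact le_trans (min_le_left _ _) (Real.rpow_le_rpow (by norm_num) hx1 hρ)
    · refine le_trans (min_le_right _ _) ?_
      have h := Real.rpow_le_rpow_of_nonpos (by linarith : (0:ℝ) < x) hx2 hρ.le
      rwa [Real.one_rpow] at h
  set ε'' := c * ε' / 12 with hε''def
  have hε''pos : 0 < ε'' := by positivity
  obtain ⟨A, hAm, hAsub, hAvol, hunif⟩ := stmt16_egorov m ρ hreg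
  rw [Metric.tendstoUniformlyOn_iff] at hunif
  obtain ⟨N₁, hN₁⟩ := (hunif ε'' hε''pos).exists_forall_of_atTop
  refine ⟨δ, hδpos, max N₁ 1, le_max_right _ _, ?_⟩
  intro n hn j hnj hjle
  have hn1 : 1 ≤ n := le_trans (le_max_right _ _) hn
  have hnpos : (0:ℝ) < (n:ℝ) := by exact_mod_cast hn1
  set lam := (j:ℝ) / n with hlamdef
  have hlam1 : 1 ≤ lam := by
    rw [le_div_iff₀ hnpos, one_mul]; exact_mod_cast hnj
  have hlam2 : lam ≤ 1 + δ := by rw [div_le_iff₀ hnpos]; exact hjle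
  obtain ⟨s, hsA, hlsA⟩ := stmt16_inter A hAm hAsub hAvol lam hlam1 (by linarith)
  obtain ⟨hs1, hs2⟩ := hAsub hsA
  have hspos : 0 < s := by linarith
  -- choose n' minimal with n ≤ ⌊s n'⌋
  have hex : ∃ k : ℕ, n ≤ ⌊s * (k:ℝ)⌋₊ := by
    refine ⟨2*n+2, Nat.le_floor ?_⟩
    push_cast
    have h := mul_le_mul_of_nonneg_right hs1 (by positivity : (0:ℝ) ≤ 2*(n:ℝ)+2)
    linarith
  obtain ⟨n', hn'spec, hn'min⟩ : ∃ n' : ℕ, n ≤ ⌊s * ((n':ℕ):ℝ)⌋₊ ∧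
      ∀ k < n', ¬ (n ≤ ⌊s * ((k:ℕ):ℝ)⌋₊) :=
    ⟨Nat.find hex, Nat.find_spec hex, fun k hk => Nat.find_min hex hk⟩
  have hn'pos : 1 ≤ n' := by
    by_contra h
    push_neg at h
    interval_cases n'
    · simp at hn'spec; omega
  have hlow : (n:ℝ) ≤ s * n' := by
    calc (n:ℝ) ≤ (⌊s * (n':ℝ)⌋₊ : ℝ) := by exact_mod_cast hn'spec
      _ ≤ s * n' := Nat.floor_le (by positivity)
  have hprev : s * ((n' - 1 : ℕ):ℝ) < n := by
    by_contra h
    push_neg at h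
    exact hn'min (n'-1) (by omega) (Nat.le_floor h)
  have hcast : ((n' - 1 : ℕ):ℝ) = (n':ℝ) - 1 := by
    push_cast [Nat.cast_sub hn'pos]; ring
  have hupp : s * n' < n + s := by
    rw [hcast] at hprev
    have he : s * ((n':ℝ) - 1) = s * n' - s := by ring
    linarith
  have hfloorn : ⌊s * ((n':ℕ):ℝ)⌋₊ = n := by
    rw [Nat.floor_eq_iff' (by omega)]
    exact ⟨hlow, by push_cast; linarith⟩
  have hn'ge : n ≤ n' := by
    have hn'0 : (0:ℝ) ≤ (n':ℝ) := Nat.cast_nonneg _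
    have h1 : s * (n':ℝ) ≤ 1 * n' := mul_le_mul_of_nonneg_right (by linarith) hn'0
    have : (n:ℝ) ≤ (n':ℝ) := by rw [one_mul] at h1; linarith
    exact_mod_cast this
  have hlsl : 1/2 ≤ lam * s := by
    have h := le_mul_of_one_le_left (le_of_lt hspos) hlam1
    linarith
  have hlsu99 : lam * s ≤ 99/100 := by
    have ha : lam * s ≤ (1+δ) * (9/10) :=
      mul_le_mul hlam2 hs2 (le_of_lt hspos) (by linarith)
    have hb : (1+δ) * (9/10) ≤ (1+1/10) * (9/10) :=
      mul_le_mul_of_nonneg_right (by linarith) (by norm_num)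
    linarith
  have hlsu : lam * s ≤ 1 := by linarith
  have hjn : (j:ℝ)/n * n = j := div_mul_cancel₀ _ (ne_of_gt hnpos)
  have hjnn : (0:ℝ) < (j:ℝ)/n := by positivity
  have hfloorj : ⌊(lam * s) * ((n':ℕ):ℝ)⌋₊ = j := by
    have hls : lam * s * (n':ℝ) = (j:ℝ)/n * (s * n') := by rw [hlamdef]; ring
    rw [Nat.floor_eq_iff' (by omega)]
    constructor
    · rw [hls]
      calc (j:ℝ) = (j:ℝ)/n * n := hjn.symm
        _ ≤ (j:ℝ)/n * (s*n') := by
            apply mul_le_mul_of_nonneg_left hlow (le_of_lt hjnn)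
    · rw [hls]
      have h1 : (j:ℝ)/n * (s*n') < (j:ℝ)/n * (n+s) := by
        apply mul_lt_mul_of_pos_left hupp hjnn
      have h2 : (j:ℝ)/n * ((n:ℝ)+s) = j + lam * s := by
        rw [mul_add, hjn, hlamdef]
      have h3 : lam * s < 1 := by linarith
      calc (j:ℝ)/n * (s*n') < (j:ℝ)/n * (n+s) := h1
        _ = j + lam*s := h2
        _ < j + 1 := by linarith
  have hN₁n' : N₁ ≤ n' := le_trans (le_trans (le_max_left _ _) hn) hn'ge
  have h1 := hN₁ n' hN₁n' (lam * s) hlsA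
  have h2 := hN₁ n' hN₁n' s hsA
  rw [Real.dist_eq, hfloorj] at h1
  rw [Real.dist_eq, hfloorn] at h2
  -- algebra
  set X := m j / m n' with hX
  set Y := m n / m n' with hY
  have hmn' := hmpos n'
  have hmn := hmpos n
  have hmj := hmpos j
  have hgc : c ≤ s ^ ρ := hrange s hs1 (by linarith)
  have hgc2 : c ≤ (lam*s)^ρ := hrange _ hlsl hlsu
  have hmul : (lam*s)^ρ = lam^ρ * s^ρ := Real.mul_rpow (by linarith) (by linarith)
  have hL := hpow lam hlam1 hlam2
  have hLabs := abs_lt.1 hL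
  have hLpos : 0 < lam ^ ρ := Real.rpow_pos_of_pos (by linarith) _
  have hLle : lam^ρ ≤ 2 := by linarith
  have hε''c : ε'' ≤ c/2 := by
    rw [hε''def]
    have h : c * ε' ≤ c * 1 := mul_le_mul_of_nonneg_left hε'1 (le_of_lt hcpos)
    linarith
  have h2' := abs_lt.1 h2
  have hYge : c/2 ≤ Y := by linarith
  have hYpos : 0 < Y := by linarith
  have hXY : m j / m n = X / Y := by
    rw [hX, hY]; field_simp
  have h1' := abs_lt.1 h1
  have habs : |X/Y - lam^ρ| ≤ ε'/2 := by
    have hnum : |X - lam^ρ * Y| ≤ 3*ε'' := by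
      have e : X - lam^ρ*Y = (X - (lam*s)^ρ) + lam^ρ * (s^ρ - Y) := by rw [hmul]; ring
      rw [e]
      calc |(X - (lam*s)^ρ) + lam^ρ * (s^ρ - Y)|
          ≤ |X - (lam*s)^ρ| + |lam^ρ * (s^ρ - Y)| := abs_add_le _ _
        _ = |X - (lam*s)^ρ| + |lam^ρ| * |s^ρ - Y| := by rw [abs_mul]
        _ ≤ ε'' + 2 * ε'' := by
            have e1 : |X - (lam*s)^ρ| ≤ ε'' := by rw [abs_sub_comm]; exact le_of_lt h1
            have e2 : |lam^ρ| = lam^ρ := abs_of_pos hLpos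
            have e3 : |s^ρ - Y| ≤ ε'' := le_of_lt h2
            rw [e2]
            have h4 : lam^ρ * |s^ρ - Y| ≤ 2 * ε'' :=
              mul_le_mul hLle e3 (abs_nonneg _) (by norm_num)
            linarith
        _ = 3*ε'' := by ring
    have e2 : X/Y - lam^ρ = (X - lam^ρ*Y)/Y := by field_simp
    rw [e2, abs_div, abs_of_pos hYpos]
    calc |X - lam^ρ*Y| / Y ≤ (3*ε'') / (c/2) :=
          div_le_div₀ (by positivity) hnum (by positivity) hYge
      _ = ε'/2 := by rw [hε''def]; field_simp; ring
  have hfin : |m j / m n - 1| ≤ ε' := by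
    rw [hXY]
    calc |X/Y - 1| ≤ |X/Y - lam^ρ| + |lam^ρ - 1| := abs_sub_le _ _ _
      _ ≤ ε'/2 + ε'/4 := add_le_add habs (le_of_lt hL)
      _ ≤ ε' := by linarith
  exact le_trans hfin hε'le

/-- If `(m_n)` is a positive regularly varying sequence of index `ρ` and `(u_n)` are
positive integers with `u_n → ∞` and `u_n/n → 0`, then
`Σ_{k=n}^{n+u_n−1} m_k ~ u_n·m_n`. -/
theorem stmt16 (m : ℕ → ℝ) (hmpos : ∀ n, 0 < m n) (ρ : ℝ)
    (hreg : ∀ a : ℝ, 0 < a →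
      Tendsto (fun n : ℕ => m ⌊a * (n : ℝ)⌋₊ / m n) atTop (nhds (a ^ ρ)))
    (u : ℕ → ℕ) (hupos : ∀ n, 0 < u n)
    (huinf : Tendsto u atTop atTop)
    (husmall : Tendsto (fun n => (u n : ℝ) / (n : ℝ)) atTop (nhds 0)) :
    Tendsto (fun n => (∑ k ∈ Finset.range (u n), m (n + k)) / ((u n : ℝ) * m n))
      atTop (nhds 1) := by
  rw [Metric.tendsto_nhds]
  intro ε hε
  have hε2 : 0 < ε/2 := by positivity
  obtain ⟨δ, hδpos, N, hN1, hunif⟩ := stmt16_unif m hmpos ρ hreg hε2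
  have hsm : ∀ᶠ n : ℕ in atTop, |(u n : ℝ) / (n : ℝ)| < δ := by
    have := Metric.tendsto_nhds.1 husmall δ hδpos
    filter_upwards [this] with n hn
    rwa [Real.dist_eq, sub_zero] at hn
  filter_upwards [hsm, eventually_ge_atTop N, eventually_ge_atTop 1] with n hδn hnN hn1
  have hnpos : (0:ℝ) < (n:ℝ) := by exact_mod_cast hn1
  have hun : (u n : ℝ) < δ * n := by
    rw [abs_of_nonneg (by positivity)] at hδn
    calc (u n : ℝ) = (u n : ℝ)/n * n := by field_simp
      _ < δ * n := by exact mul_lt_mul_of_pos_right hδn hnpos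
  have hbound : ∀ k ∈ Finset.range (u n), |m (n + k) / m n - 1| ≤ ε/2 := by
    intro k hk
    rw [Finset.mem_range] at hk
    apply hunif n hnN (n + k) (Nat.le_add_right _ _)
    have hk1 : (k:ℝ) ≤ (u n : ℝ) - 1 := by
      have : (k:ℝ) + 1 ≤ (u n : ℝ) := by exact_mod_cast hk
      linarith
    push_cast
    nlinarith
  have hmn := hmpos n
  have hupos' : (0:ℝ) < (u n : ℝ) := by exact_mod_cast hupos n
  have hsum_lb : (1 - ε/2) * ((u n : ℝ) * m n) ≤ ∑ k ∈ Finset.range (u n), m (n + k) := by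
    calc (1 - ε/2) * ((u n : ℝ) * m n) = ∑ _k ∈ Finset.range (u n), (1 - ε/2) * m n := by
          rw [Finset.sum_const, Finset.card_range, nsmul_eq_mul]; ring
      _ ≤ ∑ k ∈ Finset.range (u n), m (n + k) := by
          apply Finset.sum_le_sum
          intro k hk
          have h := (abs_le.1 (hbound k hk)).1
          have h2 : 1 - ε/2 ≤ m (n+k) / m n := by linarith
          calc (1 - ε/2) * m n ≤ (m (n+k) / m n) * m n :=
                mul_le_mul_of_nonneg_right h2 (le_of_lt hmn)
            _ = m (n+k) := by field_simp
  have hsum_ub : ∑ k ∈ Finset.range (u n), m (n + k) ≤ (1 + ε/2) * ((u n : ℝ) * m n) := by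
    calc ∑ k ∈ Finset.range (u n), m (n + k)
        ≤ ∑ _k ∈ Finset.range (u n), (1 + ε/2) * m n := by
          apply Finset.sum_le_sum
          intro k hk
          have h := (abs_le.1 (hbound k hk)).2
          have h2 : m (n+k) / m n ≤ 1 + ε/2 := by linarith
          calc m (n+k) = (m (n+k) / m n) * m n := by field_simp
            _ ≤ (1 + ε/2) * m n := mul_le_mul_of_nonneg_right h2 (le_of_lt hmn)
      _ = (1 + ε/2) * ((u n : ℝ) * m n) := by
          rw [Finset.sum_const, Finset.card_range, nsmul_eq_mul]; ring
  have hden : (0:ℝ) < (u n : ℝ) * m n := by positivity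
  rw [Real.dist_eq]
  have hub : (∑ k ∈ Finset.range (u n), m (n + k)) / ((u n : ℝ) * m n) ≤ 1 + ε/2 := by
    rw [div_le_iff₀ hden]; linarith
  have hlb : 1 - ε/2 ≤ (∑ k ∈ Finset.range (u n), m (n + k)) / ((u n : ℝ) * m n) := by
    rw [le_div_iff₀ hden]; linarith
  rw [abs_lt]
  constructor <;> linarith
end
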